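/- arXiv:2212.02883 — 8 statements merged into one kernel-verified Lean document; each statement's English description precedes it below -/
import Mathlib

section
/- Let ε > 0 and t > 0, and let X be a finite multiset of positive integers. Let X^s := {x ∈ X : x < εt/4} be the multiset of small elements of X. Suppose X^s is partitioned into nonempty multisets X^s_1, …, X^s_ξ with Σ(X^s_i) ∈ [εt/4, εt/2) for every i, and define the multiset Z := {Σ(X^s_1), …, Σ(X^s_ξ)} ⊎ (X ∖ X^s). Then: (a) for every A ⊆ X there exists B ⊆ Z such that Σ(A) − εt/2 ≤ Σ(B) ≤ Σ(A); (b) for every B′ ⊆ Z there exists A′ ⊆ X such that Σ(A′) = Σ(B′). -/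
private lemma exists_le_map {α β : Type*} [DecidableEq α] [DecidableEq β] (f : α → β) :
    ∀ (s : Multiset α) (B : Multiset β), B ≤ s.map f → ∃ t ≤ s, t.map f = B := by
  intro s
  induction s using Multiset.induction with
  | empty => intro B hB; simp at hB; exact ⟨0, le_refl _, by simp [hB]⟩
  | cons a s ih =>
    intro B hB
    rw [Multiset.map_cons] at hB
    by_cases h : f a ∈ B
    · have hB' : f a ::ₘ B.erase (f a) ≤ f a ::ₘ s.map f := by
        rwa [Multiset.cons_erase h] 
      rw [Multiset.cons_le_cons_iff] at hB'
      obtain ⟨t, ht, htB⟩ := ih _ hB'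
      exact ⟨a ::ₘ t, Multiset.cons_le_cons _ ht, by
        rw [Multiset.map_cons, htB, Multiset.cons_erase h]⟩
    · rw [Multiset.le_cons_of_notMem h] at hB
      obtain ⟨t, ht, htB⟩ := ih _ hB
      exact ⟨t, le_trans ht (Multiset.le_cons_self _ _), htB⟩

private lemma le_add_decomp {α : Type*} [DecidableEq α] (B M N : Multiset α)
    (h : B ≤ M + N) : ∃ B1 ≤ M, ∃ B2 ≤ N, B = B1 + B2 := by
  refine ⟨B ∩ M, Multiset.inter_le_right, B - B ∩ M, ?_, ?_⟩
  · rw [Multiset.le_iff_count]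
    intro a
    have := Multiset.count_le_of_le a h
    rw [Multiset.count_add] at this
    rw [Multiset.count_sub, Multiset.count_inter]
    omega
  · rw [add_tsub_cancel_of_le (Multiset.inter_le_left)]

/-- handling small elements.  Let `X^s` be the multiset of elements of `X`
smaller than `εt/4`, partitioned into nonempty multisets `parts i` each with sum in
`[εt/4, εt/2)`, and let `Z` be the multiset of these sums together with `X ∖ X^s`.
Then (a) every subset sum of `X` is approximated from below within `εt/2` by a subset
sum of `Z`, and (b) every subset sum of `Z` is exactly a subset sum of `X`. -/
theorem subsetSum_handle_small_elements
    (ε t : ℝ) (hε : 0 < ε) (ht : 0 < t)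
    (X : Multiset ℕ) (hX : ∀ x ∈ X, 0 < x)
    (ξ : ℕ) (parts : Fin ξ → Multiset ℕ)
    (hpartition : X.filter (fun x : ℕ => (x : ℝ) < ε * t / 4) = ∑ i, parts i)
    (hne : ∀ i, parts i ≠ 0)
    (hsum : ∀ i, ε * t / 4 ≤ ((parts i).sum : ℝ) ∧ ((parts i).sum : ℝ) < ε * t / 2) :
    (∀ A ≤ X, ∃ B ≤ (((Finset.univ : Finset (Fin ξ)).val.map fun i => (parts i).sum) +
        (X - X.filter (fun x : ℕ => (x : ℝ) < ε * t / 4))),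
      (A.sum : ℝ) - ε * t / 2 ≤ (B.sum : ℝ) ∧ (B.sum : ℝ) ≤ (A.sum : ℝ)) ∧
    (∀ B' ≤ (((Finset.univ : Finset (Fin ξ)).val.map fun i => (parts i).sum) +
        (X - X.filter (fun x : ℕ => (x : ℝ) < ε * t / 4))),
      ∃ A' ≤ X, A'.sum = B'.sum) := by
  set P : ℕ → Prop := fun x : ℕ => (x : ℝ) < ε * t / 4 with hP
  set S : Multiset ℕ := X.filter P with hS
  set L : Multiset ℕ := X - S with hL
  have hSX : S ≤ X := Multiset.filter_le _ _
  have hSL : S + L = X := add_tsub_cancel_of_le hSX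
  have hεt : 0 < ε * t := mul_pos hε ht
  -- sum of all part sums equals S.sum
  have hsum_sum : ∀ sf : Finset (Fin ξ), (∑ i ∈ sf, parts i).sum = ∑ i ∈ sf, (parts i).sum := by
    intro sf
    exact map_sum Multiset.sumAddMonoidHom parts sf
  have hSsum : S.sum = ∑ i, (parts i).sum := by
    rw [hpartition]; exact hsum_sum _
  have hpos : ∀ i, 0 < (parts i).sum := by
    intro i
    have := (hsum i).1
    have : (0:ℝ) < ((parts i).sum : ℝ) := lt_of_lt_of_le (by linarith) this
    exact_mod_cast this
  constructor
  · -- part (a)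
    intro A hA
    have hAdecomp : A.filter P + A.filter (fun x => ¬ P x) = A :=
      Multiset.filter_add_not _ _
    set As : Multiset ℕ := A.filter P with hAs
    set Al : Multiset ℕ := A.filter (fun x => ¬ P x) with hAl
    have hAlL : Al ≤ L := by
      have h1 : Al ≤ X.filter (fun x => ¬ P x) := Multiset.filter_le_filter _ hA
      have h2 : X.filter (fun x => ¬ P x) = L := by
        rw [hL, hS]
        exact eq_tsub_of_add_eq (by rw [add_comm]; exact Multiset.filter_add_not P X)
      rwa [h2] at h1
    have hAsS : As ≤ S := Multiset.filter_le_filter _ hA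
    set a : ℕ := As.sum with ha
    -- find maximal subset of parts with sum ≤ a
    have hnonempty : (Finset.univ.powerset.filter
        (fun s : Finset (Fin ξ) => ∑ i ∈ s, (parts i).sum ≤ a)).Nonempty := by
      refine ⟨∅, ?_⟩
      simp
    obtain ⟨s, hs_mem, hs_max⟩ := Finset.exists_max_image _
      (fun s : Finset (Fin ξ) => ∑ i ∈ s, (parts i).sum) hnonempty
    rw [Finset.mem_filter] at hs_mem
    have hsle : ∑ i ∈ s, (parts i).sum ≤ a := hs_mem.2
    have haS : a ≤ S.sum := by
      obtain ⟨k, hk⟩ := Multiset.le_iff_exists_add.mp hAsS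
      rw [hk, Multiset.sum_add]; omega
    have hkey : (a : ℝ) - ε * t / 2 ≤ (∑ i ∈ s, (parts i).sum : ℕ) := by
      by_contra hcon
      push_neg at hcon
      by_cases hsu : s = Finset.univ
      · rw [hsu, ← hSsum] at hcon
        have : (a : ℝ) ≤ (S.sum : ℝ) := by exact_mod_cast haS
        linarith
      · obtain ⟨j, hj⟩ : ∃ j, j ∉ s := by
          by_contra hc; push_neg at hc
          exact hsu (Finset.eq_univ_iff_forall.mpr hc)
        have hnew : ((∑ i ∈ insert j s, (parts i).sum : ℕ) : ℝ) < a := by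
          rw [Finset.sum_insert hj, Nat.cast_add]
          have := (hsum j).2
          linarith
        have hnewle : ∑ i ∈ insert j s, (parts i).sum ≤ a := by
          exact_mod_cast hnew.le
        have := hs_max (insert j s) (Finset.mem_filter.mpr ⟨Finset.mem_powerset.mpr
          (Finset.subset_univ _), hnewle⟩)
        rw [Finset.sum_insert hj] at this
        have := hpos j
        omega
    refine ⟨(s.val.map fun i => (parts i).sum) + Al, ?_, ?_, ?_⟩
    · exact add_le_add (Multiset.map_le_map (Finset.val_le_iff.mpr (Finset.subset_univ s)))
        hAlL
    · have hBsum : ((s.val.map fun i => (parts i).sum) + Al).sum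
          = (∑ i ∈ s, (parts i).sum) + Al.sum := by
        rw [Multiset.sum_add]; rfl
      have hAsum : A.sum = a + Al.sum := by
        rw [← hAdecomp, Multiset.sum_add]
      rw [hBsum, hAsum, Nat.cast_add, Nat.cast_add]
      linarith
    · have hBsum : ((s.val.map fun i => (parts i).sum) + Al).sum
          = (∑ i ∈ s, (parts i).sum) + Al.sum := by
        rw [Multiset.sum_add]; rfl
      have hAsum : A.sum = a + Al.sum := by
        rw [← hAdecomp, Multiset.sum_add]
      rw [hBsum, hAsum, Nat.cast_add, Nat.cast_add]
      have : ((∑ i ∈ s, (parts i).sum : ℕ) : ℝ) ≤ a := by exact_mod_cast hsle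
      linarith
  · -- part (b)
    intro B' hB'
    obtain ⟨B1, hB1, B2, hB2, hBeq⟩ := le_add_decomp _ _ _ hB'
    obtain ⟨tms, htms, htmsB⟩ := exists_le_map (fun i => (parts i).sum) _ _ hB1
    have htnd : tms.Nodup := Multiset.nodup_of_le htms Finset.univ.nodup
    set sf : Finset (Fin ξ) := ⟨tms, htnd⟩ with hsf
    refine ⟨(∑ i ∈ sf, parts i) + B2, ?_, ?_⟩
    · rw [← hSL]
      refine add_le_add ?_ hB2
      have : ∑ i ∈ sf, parts i ≤ ∑ i ∈ Finset.univ, parts i :=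
        Finset.sum_le_sum_of_subset (Finset.subset_univ sf)
      rw [← hpartition] at this
      exact this
    · rw [Multiset.sum_add, hBeq, Multiset.sum_add]
      congr 1
      rw [← htmsB]
      rw [hsum_sum sf]
      rfl
end

section
/- There is an absolute constant C > 0 with the following property. Let A be a nonempty finite multiset of positive integers with |A| = n and n′ := |set(A)| distinct values. Then there exists a partition of A into nonempty multisets A₁, …, A_m (i.e., A = A₁ ⊎ ⋯ ⊎ A_m) such that for every ι, Σ(A_ι) = 2^{p_ι} · max(A_ι) for some integer p_ι with 0 ≤ p_ι ≤ log₂ n, and such that the multiset B := {Σ(A₁), …, Σ(A_m)} satisfies: (i) S(A) = S(B); (ii) |B| ≤ n and |B| ≤ C·n′·(1 + log₂ n); (iii) no element of B has multiplicity exceeding two. -/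
open Multiset

/-- subset sums -/
def SS (M : Multiset ℕ) : Set ℕ := {s : ℕ | ∃ Y ≤ M, Y.sum = s}

lemma le_cons_cases {a : ℕ} {M Y : Multiset ℕ} (h : Y ≤ a ::ₘ M) :
    Y ≤ M ∨ ∃ Z, Z ≤ M ∧ Y = a ::ₘ Z := by
  by_cases ha : a ∈ Y
  · right
    refine ⟨Y.erase a, ?_, (Multiset.cons_erase ha).symm⟩
    rw [← Multiset.cons_le_cons_iff a, Multiset.cons_erase ha]
    exact h
  · left
    rw [Multiset.le_iff_count] at h ⊢
    intro x
    have hx := h x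
    rcases eq_or_ne x a with rfl | hne
    · simp [Multiset.count_eq_zero_of_notMem ha]
    · simpa [Multiset.count_cons, hne] using hx

lemma sup_mem {Q : Multiset ℕ} (hQ : Q ≠ 0) : Q.sup ∈ Q := by
  induction Q using Multiset.induction with
  | empty => simp at hQ
  | cons a s ih =>
    rcases eq_or_ne s 0 with rfl | hs
    · simp
    · have hm := ih hs
      rw [Multiset.sup_cons]
      rcases le_total a s.sup with h | h
      · rw [sup_eq_right.mpr h]; exact Multiset.mem_cons_of_mem hm
      · rw [sup_eq_left.mpr h]; exact Multiset.mem_cons_self a s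

lemma SS_merge {b : ℕ} (hb : 0 < b) {B₂ : Multiset ℕ} (h1 : b ∈ B₂) :
    SS ((2*b) ::ₘ B₂) = SS (b ::ₘ b ::ₘ B₂) := by
  have h2b : 2 * b ≠ b := by omega
  ext s
  constructor
  · rintro ⟨Y, hY, rfl⟩
    rcases le_cons_cases hY with hY' | ⟨Z, hZ, rfl⟩
    · exact ⟨Y, le_trans hY' (le_trans (Multiset.le_cons_self _ _)
        (Multiset.cons_le_cons _ (Multiset.le_cons_self _ _))), rfl⟩
    · refine ⟨b ::ₘ b ::ₘ Z, Multiset.cons_le_cons _ (Multiset.cons_le_cons _ hZ), ?_⟩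
      simp; ring
  · rintro ⟨Y, hY, rfl⟩
    set c := Multiset.count b B₂ with hc
    have hc1 : 1 ≤ c := Multiset.one_le_count_iff_mem.mpr h1
    set j := Multiset.count b Y with hj
    have hjle : j ≤ c + 2 := by
      have := (Multiset.le_iff_count.mp hY) b
      simpa [Multiset.count_cons_self, ← hc, ← hj] using this
    have hsplit : Multiset.filter (fun x => x = b) Y
        + Multiset.filter (fun x => ¬ x = b) Y = Y :=
      Multiset.filter_add_not _ Y
    set Y' := Multiset.filter (fun x => ¬ x = b) Y with hY'
    have hYeq : Y = Multiset.replicate j b + Y' := by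
      rw [← hsplit, Multiset.filter_eq']
    have hsum : Y.sum = j * b + Y'.sum := by
      rw [hYeq, Multiset.sum_add, Multiset.sum_replicate, smul_eq_mul]
    have hcntY' : ∀ x, Multiset.count x Y' ≤ Multiset.count x B₂ := by
      intro x
      rcases eq_or_ne x b with rfl | hne
      · simp [hY']
      · have h₁ : Multiset.count x Y' = Multiset.count x Y := by
          rw [hY', Multiset.count_filter]; simp [hne]
        have h₂ := (Multiset.le_iff_count.mp hY) x
        rw [Multiset.count_cons_of_ne hne, Multiset.count_cons_of_ne hne] at h₂
        omega
    have h0 : Multiset.count b Y' = 0 := by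
      rw [hY', Multiset.count_filter]; simp
    by_cases hcase : j ≤ c
    · refine ⟨Multiset.replicate j b + Y', ?_, by
        rw [Multiset.sum_add, Multiset.sum_replicate, smul_eq_mul, ← hsum]⟩
      rw [Multiset.le_iff_count]
      intro x
      have := hcntY' x
      rw [Multiset.count_add, Multiset.count_replicate]
      rcases eq_or_ne x b with rfl | hne
      · rw [if_pos rfl, Multiset.count_cons_of_ne (Ne.symm h2b)]
        omega
      · rw [if_neg (fun h => hne h.symm)]
        rcases eq_or_ne x (2*b) with rfl | hne2
        · rw [Multiset.count_cons_self]; omega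
        · rw [Multiset.count_cons_of_ne hne2]; omega
    · -- j ≥ c + 1 ≥ 2
      have hj2 : 2 ≤ j := by omega
      refine ⟨(2*b) ::ₘ (Multiset.replicate (j-2) b + Y'), ?_, ?_⟩
      · rw [Multiset.le_iff_count]
        intro x
        have := hcntY' x
        rcases eq_or_ne x (2*b) with rfl | hne2
        · rw [Multiset.count_cons_self, Multiset.count_cons_self,
            Multiset.count_add, Multiset.count_replicate, if_neg (Ne.symm h2b)]
          omega
        · rw [Multiset.count_cons_of_ne hne2, Multiset.count_cons_of_ne hne2,
            Multiset.count_add, Multiset.count_replicate]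
          rcases eq_or_ne x b with rfl | hne
          · rw [if_pos rfl]; omega
          · rw [if_neg (fun h => hne h.symm)]; omega
      · rw [Multiset.sum_cons, Multiset.sum_add, Multiset.sum_replicate, smul_eq_mul, hsum]
        have : 2 * b + (j - 2) * b = j * b := by
          have : j - 2 + 2 = j := by omega
          calc 2 * b + (j-2) * b = (j - 2 + 2) * b := by ring
          _ = j * b := by rw [this]
        omega

lemma mem_of_mem_sum {P : Multiset (Multiset ℕ)} {Q : Multiset ℕ} (hQ : Q ∈ P)
    {a : ℕ} (ha : a ∈ Q) : a ∈ P.sum := by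
  induction P using Multiset.induction with
  | empty => simp at hQ
  | cons R s ihs =>
    rw [Multiset.sum_cons, Multiset.mem_add]
    rcases Multiset.mem_cons.mp hQ with rfl | h
    · exact Or.inl ha
    · exact Or.inr (ihs h)

lemma reduce (A : Multiset ℕ) (hA : ∀ a ∈ A, 0 < a) :
    ∀ k (P : Multiset (Multiset ℕ)), Multiset.card P = k → P.sum = A →
    (∀ Q ∈ P, Q ≠ 0) → (∀ Q ∈ P, ∃ p, Q.sum = 2^p * Q.sup) →
    SS (P.map Multiset.sum) = SS A →
    ∃ P' : Multiset (Multiset ℕ), P'.sum = A ∧ (∀ Q ∈ P', Q ≠ 0) ∧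
      (∀ Q ∈ P', ∃ p, Q.sum = 2^p * Q.sup) ∧ SS (P'.map Multiset.sum) = SS A ∧
      Multiset.card P' ≤ Multiset.card P ∧
      ∀ b, (P'.map Multiset.sum).count b ≤ 2 := by
  intro k
  induction k using Nat.strong_induction_on with
  | _ k ih =>
    intro P hcard hsum hne hpow hSS
    by_cases hex : ∃ b, 3 ≤ (P.map Multiset.sum).count b
    · obtain ⟨b, hb3⟩ := hex
      -- extract two parts with sum b
      have hbmem : b ∈ P.map Multiset.sum := by
        rw [← Multiset.count_pos]; omega
      obtain ⟨Q1, hQ1mem, hQ1sum⟩ := Multiset.mem_map.mp hbmem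
      set P₁ := P.erase Q1 with hP₁
      have hP1 : P = Q1 ::ₘ P₁ := (Multiset.cons_erase hQ1mem).symm
      have hcnt1 : 2 ≤ (P₁.map Multiset.sum).count b := by
        have : P.map Multiset.sum = b ::ₘ P₁.map Multiset.sum := by
          rw [hP1, Multiset.map_cons, hQ1sum]
        rw [this, Multiset.count_cons_self] at hb3
        omega
      have hbmem1 : b ∈ P₁.map Multiset.sum := by
        rw [← Multiset.count_pos]; omega
      obtain ⟨Q2, hQ2mem, hQ2sum⟩ := Multiset.mem_map.mp hbmem1
      set P₂ := P₁.erase Q2 with hP₂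
      have hP2 : P₁ = Q2 ::ₘ P₂ := (Multiset.cons_erase hQ2mem).symm
      have hbmem2 : b ∈ P₂.map Multiset.sum := by
        have : P₁.map Multiset.sum = b ::ₘ P₂.map Multiset.sum := by
          rw [hP2, Multiset.map_cons, hQ2sum]
        rw [this, Multiset.count_cons_self] at hcnt1
        rw [← Multiset.count_pos]; omega
      -- wlog sup Q2 ≤ sup Q1
      obtain ⟨Qa, Qb, hPab, hQa, hQb, hsup⟩ :
          ∃ Qa Qb : Multiset ℕ, P = Qa ::ₘ Qb ::ₘ P₂ ∧ Qa.sum = b ∧ Qb.sum = b ∧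
            Qb.sup ≤ Qa.sup := by
        rcases le_total Q2.sup Q1.sup with h | h
        · exact ⟨Q1, Q2, by rw [hP1, hP2], hQ1sum, hQ2sum, h⟩
        · exact ⟨Q2, Q1, by rw [hP1, hP2, Multiset.cons_swap], hQ2sum, hQ1sum, h⟩
      have hQamem : Qa ∈ P := by rw [hPab]; exact Multiset.mem_cons_self _ _
      have hQbmem : Qb ∈ P := by
        rw [hPab]; exact Multiset.mem_cons_of_mem (Multiset.mem_cons_self _ _)
      have hmemA : ∀ Q ∈ P, ∀ a ∈ Q, a ∈ A := by
        intro Q hQ a ha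
        rw [← hsum]
        exact mem_of_mem_sum hQ ha
      have hbpos : 0 < b := by
        rcases Multiset.exists_mem_of_ne_zero (hne Qa hQamem) with ⟨a, ha⟩
        have h1 : 0 < a := hA a (hmemA Qa hQamem a ha)
        have h2 : a ≤ Qa.sum := Multiset.single_le_sum (fun x _ => Nat.zero_le x) a ha
        omega
      set P' := (Qa + Qb) ::ₘ P₂ with hP'
      have hcard' : Multiset.card P' = k - 1 := by
        rw [hP', Multiset.card_cons]
        have : Multiset.card P = Multiset.card P₂ + 2 := by
          rw [hPab]; simp
        omega
      have hk1 : k - 1 < k := by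
        have : Multiset.card P = Multiset.card P₂ + 2 := by rw [hPab]; simp
        omega
      have hsum' : P'.sum = A := by
        rw [hP', Multiset.sum_cons, ← hsum, hPab, Multiset.sum_cons, Multiset.sum_cons]
        rw [add_assoc]
      have hne' : ∀ Q ∈ P', Q ≠ 0 := by
        intro Q hQ
        rcases Multiset.mem_cons.mp hQ with rfl | hQ
        · intro h
          rcases Multiset.exists_mem_of_ne_zero (hne Qa hQamem) with ⟨a, ha⟩
          have : a ∈ Qa + Qb := Multiset.mem_add.mpr (Or.inl ha)
          rw [h] at this; simp at this
        · refine hne Q ?_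
          rw [hPab]
          exact Multiset.mem_cons_of_mem (Multiset.mem_cons_of_mem hQ)
      have hpow' : ∀ Q ∈ P', ∃ p, Q.sum = 2^p * Q.sup := by
        intro Q hQ
        rcases Multiset.mem_cons.mp hQ with rfl | hQ
        · obtain ⟨pa, hpa⟩ := hpow Qa hQamem
          refine ⟨pa + 1, ?_⟩
          rw [Multiset.sum_add, Multiset.sup_add, sup_of_le_left hsup, hQa, hQb, ← hQa, hpa]
          ring
        · refine hpow Q ?_
          rw [hPab]
          exact Multiset.mem_cons_of_mem (Multiset.mem_cons_of_mem hQ)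
      have hSS' : SS (P'.map Multiset.sum) = SS A := by
        have e1 : P'.map Multiset.sum = (2*b) ::ₘ P₂.map Multiset.sum := by
          rw [hP', Multiset.map_cons, Multiset.sum_add, hQa, hQb]
          congr 1; ring
        have e2 : P.map Multiset.sum = b ::ₘ b ::ₘ P₂.map Multiset.sum := by
          rw [hPab, Multiset.map_cons, Multiset.map_cons, hQa, hQb]
        rw [e1, SS_merge hbpos hbmem2, ← e2, hSS]
      obtain ⟨P'', h1, h2, h3, h4, h5, h6⟩ :=
        ih (k-1) hk1 P' hcard' hsum' hne' hpow' hSS'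
      exact ⟨P'', h1, h2, h3, h4, by omega, h6⟩
    · push_neg at hex
      exact ⟨P, hsum, hne, hpow, hSS, le_refl _, fun b => by have := hex b; omega⟩

/-- reduction of a multiset to one with multiplicities at most two.  Any
nonempty multiset `A` of positive integers can be partitioned into nonempty parts, each
of whose sum is `2^p` times its maximum with `p ≤ log₂ |A|`, so that the multiset `B` of
part sums has the same subset sums as `A`, has cardinality at most `|A|` and at most
`C·|set(A)|·(1 + log₂|A|)`, and has all multiplicities at most two. -/
theorem multiset_to_multiplicity_two :
    ∃ C : ℝ, 0 < C ∧
      ∀ (A : Multiset ℕ), A ≠ 0 → (∀ a ∈ A, 0 < a) →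
      ∃ (m : ℕ) (parts : Fin m → Multiset ℕ),
        A = ∑ i, parts i ∧
        (∀ i, parts i ≠ 0) ∧
        (∀ i, ∃ p : ℕ, (p : ℝ) ≤ Real.logb 2 (Multiset.card A) ∧
          (parts i).sum = 2 ^ p * (parts i).sup) ∧
        ({s : ℕ | ∃ Y ≤ A, Y.sum = s} =
          {s : ℕ | ∃ Y ≤ ((Finset.univ : Finset (Fin m)).val.map fun i => (parts i).sum),
            Y.sum = s}) ∧
        Multiset.card ((Finset.univ : Finset (Fin m)).val.map fun i => (parts i).sum) ≤
          Multiset.card A ∧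
        ((Multiset.card ((Finset.univ : Finset (Fin m)).val.map fun i => (parts i).sum) : ℝ) ≤
          C * A.toFinset.card * (1 + Real.logb 2 (Multiset.card A))) ∧
        (∀ b : ℕ, ((Finset.univ : Finset (Fin m)).val.map fun i => (parts i).sum).count b ≤ 2) := by
  refine ⟨2, by norm_num, ?_⟩
  intro A hA0 hApos
  set n := Multiset.card A with hn
  have hn0 : n ≠ 0 := by
    intro h
    exact hA0 (Multiset.card_eq_zero.mp (hn ▸ h))
  set P₀ : Multiset (Multiset ℕ) := A.map (fun a => ({a} : Multiset ℕ)) with hP₀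
  have h₀sum : P₀.sum = A := Multiset.sum_map_singleton A
  have h₀ne : ∀ Q ∈ P₀, Q ≠ 0 := by
    intro Q hQ
    obtain ⟨a, _, rfl⟩ := Multiset.mem_map.mp hQ
    simp
  have h₀pow : ∀ Q ∈ P₀, ∃ p, Q.sum = 2^p * Q.sup := by
    intro Q hQ
    obtain ⟨a, _, rfl⟩ := Multiset.mem_map.mp hQ
    exact ⟨0, by simp⟩
  have h₀SS : SS (P₀.map Multiset.sum) = SS A := by
    have : P₀.map Multiset.sum = A := by
      rw [hP₀, Multiset.map_map]
      simp
    rw [this]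
  obtain ⟨P, hPsum, hPne, hPpow, hPSS, hPcard, hPcnt⟩ :=
    reduce A hApos (Multiset.card P₀) P₀ rfl h₀sum h₀ne h₀pow h₀SS
  have hP₀card : Multiset.card P₀ = n := by rw [hP₀, Multiset.card_map]
  have hQA : ∀ Q ∈ P, Q ≤ A := by
    intro Q hQ
    obtain ⟨R, hR⟩ := Multiset.exists_cons_of_mem hQ
    rw [← hPsum, hR, Multiset.sum_cons]
    exact le_self_add
  have hsupA : ∀ Q ∈ P, Q.sup ∈ A := fun Q hQ =>
    Multiset.mem_of_le (hQA Q hQ) (sup_mem (hPne Q hQ))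
  have hplog : ∀ Q ∈ P, ∀ p, Q.sum = 2^p * Q.sup → p ≤ Nat.log 2 n := by
    intro Q hQ p hp
    have hsup0 : 0 < Q.sup := hApos _ (hsupA Q hQ)
    have h1 : Q.sum ≤ Multiset.card Q * Q.sup := by
      have := Multiset.sum_le_card_nsmul Q Q.sup (fun x hx => Multiset.le_sup hx)
      simpa [smul_eq_mul] using this
    have h2 : 2^p * Q.sup ≤ Multiset.card Q * Q.sup := hp ▸ h1
    have h3 : 2^p ≤ Multiset.card Q := Nat.le_of_mul_le_mul_right h2 hsup0
    have h4 : Multiset.card Q ≤ n := by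
      rw [hn]; exact Multiset.card_le_card (hQA Q hQ)
    exact (Nat.le_log_iff_pow_le one_lt_two hn0).mpr (le_trans h3 h4)
  have hlogb : (Nat.log 2 n : ℝ) ≤ Real.logb 2 (n : ℝ) := by
    have := Real.natLog_le_logb n 2
    simpa using this
  set L := P.toList with hL
  set m := L.length with hm
  set parts : Fin m → Multiset ℕ := fun i => L.get i with hparts
  have hofn : List.ofFn parts = L := List.ofFn_get L
  have hBmap : ((Finset.univ : Finset (Fin m)).val.map fun i => (parts i).sum)
      = P.map Multiset.sum := by
    have h1 : ((Finset.univ : Finset (Fin m)).val.map fun i => (parts i).sum)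
        = ↑(List.ofFn fun i => (parts i).sum) := by
      simp [Fin.univ_def, List.ofFn_eq_map]
    have h2 : (List.ofFn fun i => (parts i).sum) = L.map Multiset.sum := by
      rw [← hofn, List.map_ofFn]
      rfl
    rw [h1, h2, ← Multiset.map_coe, hL, Multiset.coe_toList]
  have hmemL : ∀ i : Fin m, parts i ∈ P := by
    intro i
    have : parts i ∈ L := List.get_mem L i
    rwa [hL, Multiset.mem_toList] at this
  refine ⟨m, parts, ?_, ?_, ?_, ?_, ?_, ?_, ?_⟩
  · have h1 : (List.ofFn parts).sum = ∑ i, parts i := List.sum_ofFn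
    rw [← h1, hofn, hL, Multiset.sum_toList, hPsum]
  · intro i
    exact hPne _ (hmemL i)
  · intro i
    obtain ⟨p, hp⟩ := hPpow _ (hmemL i)
    refine ⟨p, ?_, hp⟩
    have h1 : p ≤ Nat.log 2 n := hplog _ (hmemL i) p hp
    calc (p : ℝ) ≤ (Nat.log 2 n : ℝ) := by exact_mod_cast h1
    _ ≤ Real.logb 2 (n : ℝ) := hlogb
  · show SS A = SS _
    rw [hBmap, hPSS]
  · rw [hBmap, Multiset.card_map]
    calc Multiset.card P ≤ Multiset.card P₀ := hPcard
    _ = n := hP₀card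
  · rw [hBmap]
    set B := P.map Multiset.sum with hB
    set T : Finset ℕ := (A.toFinset ×ˢ Finset.range (Nat.log 2 n + 1)).image
      (fun x => 2^x.2 * x.1) with hT
    have hsub : B.toFinset ⊆ T := by
      intro b hb
      have hbB : b ∈ B := Multiset.mem_toFinset.mp hb
      obtain ⟨Q, hQ, hQb⟩ := Multiset.mem_map.mp hbB
      obtain ⟨p, hp⟩ := hPpow Q hQ
      refine Finset.mem_image.mpr ⟨(Q.sup, p), ?_, by rw [← hQb, hp]⟩
      refine Finset.mem_product.mpr ⟨Multiset.mem_toFinset.mpr (hsupA Q hQ), ?_⟩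
      exact Finset.mem_range.mpr (Nat.lt_succ_of_le (hplog Q hQ p hp))
    have hTcard : T.card ≤ A.toFinset.card * (Nat.log 2 n + 1) := by
      calc T.card ≤ (A.toFinset ×ˢ Finset.range (Nat.log 2 n + 1)).card :=
        Finset.card_image_le
      _ = A.toFinset.card * (Nat.log 2 n + 1) := by
        rw [Finset.card_product, Finset.card_range]
    have hBcard : Multiset.card B ≤ 2 * (A.toFinset.card * (Nat.log 2 n + 1)) := by
      calc Multiset.card B = ∑ b ∈ B.toFinset, B.count b :=
        (Multiset.toFinset_sum_count_eq B).symm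
      _ ≤ ∑ _b ∈ B.toFinset, 2 := Finset.sum_le_sum (fun b _ => hPcnt b)
      _ = 2 * B.toFinset.card := by rw [Finset.sum_const, smul_eq_mul, mul_comm]
      _ ≤ 2 * T.card := by
        have := Finset.card_le_card hsub
        omega
      _ ≤ 2 * (A.toFinset.card * (Nat.log 2 n + 1)) := by omega
    have h1 : (Multiset.card B : ℝ) ≤
        2 * (A.toFinset.card : ℝ) * ((Nat.log 2 n : ℝ) + 1) := by
      have h0 : (Multiset.card B : ℝ) ≤
          ((2 * (A.toFinset.card * (Nat.log 2 n + 1)) : ℕ) : ℝ) := by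
        exact_mod_cast hBcard
      push_cast at h0
      linarith
    have h2 : ((Nat.log 2 n : ℝ) + 1) ≤ 1 + Real.logb 2 (n : ℝ) := by linarith
    calc (Multiset.card B : ℝ) ≤ 2 * (A.toFinset.card : ℝ) * ((Nat.log 2 n : ℝ) + 1) := h1
    _ ≤ 2 * (A.toFinset.card : ℝ) * (1 + Real.logb 2 (n : ℝ)) := by
      apply mul_le_mul_of_nonneg_left h2
      positivity
  · intro b
    rw [hBmap]
    exact hPcnt b
end

section
/- Let B₁ and B₂ be nonempty finite multisets of nonnegative reals, let ε ∈ (0,1], and set σ := max(B₁) + max(B₂); assume σ > 0. For i = 1,2 define the finite set B̃_i := {⌊x/(εσ/2)⌋ : x ∈ B_i} of nonnegative integers, and let C := (εσ/2)·(B̃₁ ⊕ B̃₂) = {(εσ/2)(a+b) : a ∈ B̃₁ ∪ {0}, b ∈ B̃₂ ∪ {0}}. Then C is an ε-approximate set of the sumset B₁ ⊕ B₂, and |C| ≤ 2/ε + 1. -/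
/-- `C` is an `(r, u)`-approximate set of `A ⊆ ℝ`:
(i) `C ⊆ [0, (1+r)u]`; (ii) every `c ∈ C` is within `ru` of some `a ∈ A`;
(iii) every `a ∈ A` with `a ≤ u` is within `ru` of some `c ∈ C`. -/
def IsApproxSet (r u : ℝ) (A : Set ℝ) (C : Set ℝ) : Prop :=
  C ⊆ Set.Icc 0 ((1 + r) * u) ∧
  (∀ c ∈ C, ∃ a ∈ A, |c - a| ≤ r * u) ∧
  (∀ a ∈ A, a ≤ u → ∃ c ∈ C, |c - a| ≤ r * u)

/-- The sumset `B₁ ⊕ B₂ = {x₁ + x₂ : xᵢ ∈ Bᵢ ∪ {0}}` of two multisets of reals. -/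
def msetSumset (B₁ B₂ : Multiset ℝ) : Set ℝ :=
  {s | ∃ x₁ x₂ : ℝ, (x₁ ∈ B₁ ∨ x₁ = 0) ∧ (x₂ ∈ B₂ ∨ x₂ = 0) ∧ s = x₁ + x₂}

/-- the rounded/rescaled sumset `C := (εσ/2)·(B̃₁ ⊕ B̃₂)`, where
`B̃ᵢ = {⌊x/(εσ/2)⌋ : x ∈ Bᵢ}` and `σ = max B₁ + max B₂`, is an `ε`-approximate set of
`B₁ ⊕ B₂` of cardinality at most `2/ε + 1`. -/
theorem approx_sumset_by_rounding
    (B₁ B₂ : Multiset ℝ) (h₁ : ∀ x ∈ B₁, 0 ≤ x) (h₂ : ∀ x ∈ B₂, 0 ≤ x)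
    (ε : ℝ) (hε₁ : 0 < ε) (hε₂ : ε ≤ 1)
    (M₁ M₂ : ℝ) (hM₁ : M₁ ∈ B₁ ∧ ∀ x ∈ B₁, x ≤ M₁) (hM₂ : M₂ ∈ B₂ ∧ ∀ x ∈ B₂, x ≤ M₂)
    (hσ : 0 < M₁ + M₂) :
    let σ : ℝ := M₁ + M₂
    let Bt₁ : Set ℕ := {n | ∃ x ∈ B₁, n = ⌊x / (ε * σ / 2)⌋₊}
    let Bt₂ : Set ℕ := {n | ∃ x ∈ B₂, n = ⌊x / (ε * σ / 2)⌋₊}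
    let C : Set ℝ := {s | ∃ a b : ℕ, (a ∈ Bt₁ ∨ a = 0) ∧ (b ∈ Bt₂ ∨ b = 0) ∧
      s = ε * σ / 2 * ((a : ℝ) + (b : ℝ))}
    IsApproxSet ε σ (msetSumset B₁ B₂) C ∧ (C.ncard : ℝ) ≤ 2 / ε + 1 := by
  intro σ Bt₁ Bt₂ C
  have hσ' : (0:ℝ) < σ := hσ
  have hδ : 0 < ε * σ / 2 := by positivity
  set δ : ℝ := ε * σ / 2 with hδdef
  have hσdef : σ = M₁ + M₂ := rfl
  have h2δ : 2 * δ = ε * σ := by rw [hδdef]; ring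
  have hεσ : 0 ≤ ε * σ := by positivity
  have hM₁0 : 0 ≤ M₁ := h₁ M₁ hM₁.1
  have hM₂0 : 0 ≤ M₂ := h₂ M₂ hM₂.1
  -- floor facts
  have key : ∀ x : ℝ, 0 ≤ x → δ * ⌊x / δ⌋₊ ≤ x ∧ x - δ * ⌊x / δ⌋₊ < δ := by
    intro x hx
    have hle : (⌊x/δ⌋₊ : ℝ) ≤ x/δ := Nat.floor_le (div_nonneg hx hδ.le)
    have hlt : x/δ < ⌊x/δ⌋₊ + 1 := Nat.lt_floor_add_one (x/δ)
    have h1 : δ * ⌊x/δ⌋₊ ≤ δ * (x/δ) := by nlinarith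
    have h2 : δ * (x/δ) < δ * (⌊x/δ⌋₊ + 1) := by nlinarith
    have h3 : δ * (x/δ) = x := by field_simp
    constructor <;> nlinarith
  -- bound and approx helpers
  have bound₁ : ∀ a : ℕ, (a ∈ Bt₁ ∨ a = 0) → δ * a ≤ M₁ := by
    rintro a (⟨x, hx, rfl⟩ | rfl)
    · exact le_trans (key x (h₁ x hx)).1 (hM₁.2 x hx)
    · simpa using hM₁0
  have bound₂ : ∀ b : ℕ, (b ∈ Bt₂ ∨ b = 0) → δ * b ≤ M₂ := by
    rintro b (⟨x, hx, rfl⟩ | rfl)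
    · exact le_trans (key x (h₂ x hx)).1 (hM₂.2 x hx)
    · simpa using hM₂0
  have approx₁ : ∀ a : ℕ, (a ∈ Bt₁ ∨ a = 0) →
      ∃ x : ℝ, (x ∈ B₁ ∨ x = 0) ∧ δ * a ≤ x ∧ x - δ * a < δ := by
    rintro a (⟨x, hx, rfl⟩ | rfl)
    · exact ⟨x, Or.inl hx, (key x (h₁ x hx)).1, (key x (h₁ x hx)).2⟩
    · exact ⟨0, Or.inr rfl, by simp, by simpa using hδ⟩
  have approx₂ : ∀ b : ℕ, (b ∈ Bt₂ ∨ b = 0) →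
      ∃ x : ℝ, (x ∈ B₂ ∨ x = 0) ∧ δ * b ≤ x ∧ x - δ * b < δ := by
    rintro b (⟨x, hx, rfl⟩ | rfl)
    · exact ⟨x, Or.inl hx, (key x (h₂ x hx)).1, (key x (h₂ x hx)).2⟩
    · exact ⟨0, Or.inr rfl, by simp, by simpa using hδ⟩
  have round₁ : ∀ x : ℝ, (x ∈ B₁ ∨ x = 0) →
      ∃ a : ℕ, (a ∈ Bt₁ ∨ a = 0) ∧ δ * a ≤ x ∧ x - δ * a < δ := by
    rintro x (hx | rfl)
    · exact ⟨⌊x/δ⌋₊, Or.inl ⟨x, hx, rfl⟩, (key x (h₁ x hx)).1, (key x (h₁ x hx)).2⟩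
    · exact ⟨0, Or.inr rfl, by simp, by simpa using hδ⟩
  have round₂ : ∀ x : ℝ, (x ∈ B₂ ∨ x = 0) →
      ∃ b : ℕ, (b ∈ Bt₂ ∨ b = 0) ∧ δ * b ≤ x ∧ x - δ * b < δ := by
    rintro x (hx | rfl)
    · exact ⟨⌊x/δ⌋₊, Or.inl ⟨x, hx, rfl⟩, (key x (h₂ x hx)).1, (key x (h₂ x hx)).2⟩
    · exact ⟨0, Or.inr rfl, by simp, by simpa using hδ⟩
  constructor
  · refine ⟨?_, ?_, ?_⟩
    · rintro c ⟨a, b, ha, hb, rfl⟩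
      have h1 := bound₁ a ha
      have h2 := bound₂ b hb
      constructor
      · positivity
      · rw [← hδdef]
        have hexp : δ * ((a:ℝ) + b) = δ * a + δ * b := by ring
        have : (1 + ε) * σ = σ + ε * σ := by ring
        linarith
    · rintro c ⟨a, b, ha, hb, rfl⟩
      obtain ⟨x₁, hx₁, hx₁le, hx₁lt⟩ := approx₁ a ha
      obtain ⟨x₂, hx₂, hx₂le, hx₂lt⟩ := approx₂ b hb
      refine ⟨x₁ + x₂, ⟨x₁, x₂, hx₁, hx₂, rfl⟩, ?_⟩
      have hexp : δ * ((a:ℝ) + b) = δ * a + δ * b := by ring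
      rw [← hδdef, abs_le]
      constructor <;> linarith
    · rintro s ⟨x₁, x₂, hx₁, hx₂, rfl⟩ _
      obtain ⟨a, ha, hale, halt⟩ := round₁ x₁ hx₁
      obtain ⟨b, hb, hble, hblt⟩ := round₂ x₂ hx₂
      refine ⟨δ * (↑a + ↑b), ⟨a, b, ha, hb, rfl⟩, ?_⟩
      have hexp : δ * ((a:ℝ) + b) = δ * a + δ * b := by ring
      rw [abs_le]
      constructor <;> linarith
  · -- cardinality
    set N : ℕ := ⌊2/ε⌋₊ with hN
    have hsub : C ⊆ (fun k : ℕ => δ * k) '' (Set.Iic N) := by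
      rintro c ⟨a, b, ha, hb, rfl⟩
      refine ⟨a + b, ?_, by push_cast; ring⟩
      have h1 := bound₁ a ha
      have h2 := bound₂ b hb
      have hexp : δ * ((a:ℝ) + b) = δ * a + δ * b := by ring
      have hab : δ * ((a:ℝ) + b) ≤ σ := by linarith
      rw [hδdef] at hab
      have : ((a + b : ℕ) : ℝ) ≤ 2/ε := by
        push_cast
        rw [le_div_iff₀ hε₁]
        nlinarith
      exact Nat.le_floor this
    have hfin : ((fun k : ℕ => δ * k) '' (Set.Iic N)).Finite :=
      (Set.finite_Iic N).image _
    have h1 : C.ncard ≤ ((fun k : ℕ => δ * k) '' (Set.Iic N)).ncard :=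
      Set.ncard_le_ncard hsub hfin
    have h2 : ((fun k : ℕ => δ * k) '' (Set.Iic N)).ncard ≤ (Set.Iic N).ncard :=
      Set.ncard_image_le (Set.finite_Iic N)
    have h3 : (Set.Iic N).ncard = N + 1 := by
      rw [← Finset.coe_Iic, Set.ncard_coe_finset, Nat.card_Iic]
    have h4 : C.ncard ≤ N + 1 := by omega
    have h5 : (N : ℝ) ≤ 2/ε := Nat.floor_le (by positivity)
    have h6 : (C.ncard : ℝ) ≤ (N : ℝ) + 1 := by exact_mod_cast h4
    linarith
end

section
/- Let A₁ and A₂ be nonempty finite multisets of nonnegative reals, and let ρ ≥ 0 and ε ≥ 0 be reals. Suppose that, for i = 1,2, B_i is a ρ-approximate set of A_i, and suppose C is an ε-approximate set of the sumset B₁ ⊕ B₂. Then C is an (ε + (1+ε)ρ)-approximate set of the sumset A₁ ⊕ A₂. -/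
/-- The sumset `A ⊕ B = {a + b : a ∈ A ∪ {0}, b ∈ B ∪ {0}}` of two sets of reals. -/
def setSumset (A B : Set ℝ) : Set ℝ :=
  {s | ∃ a ∈ insert (0 : ℝ) A, ∃ b ∈ insert (0 : ℝ) B, s = a + b}

/-- if `Bᵢ` is a `ρ`-approximate set of the multiset `Aᵢ` (relative to
`max Aᵢ`), and `C` is an `ε`-approximate set of `B₁ ⊕ B₂` (relative to
`max B₁ + max B₂ = max (B₁ ⊕ B₂)`), then `C` is an `(ε + (1+ε)ρ)`-approximate set
of `A₁ ⊕ A₂` (relative to `max A₁ + max A₂ = max (A₁ ⊕ A₂)`). -/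
theorem approx_of_approx_sumset
    (A₁ A₂ : Multiset ℝ) (hA₁ : ∀ x ∈ A₁, 0 ≤ x) (hA₂ : ∀ x ∈ A₂, 0 ≤ x)
    (ρ ε : ℝ) (hρ : 0 ≤ ρ) (hε : 0 ≤ ε)
    (MA₁ MA₂ : ℝ)
    (hMA₁ : MA₁ ∈ A₁ ∧ ∀ x ∈ A₁, x ≤ MA₁) (hMA₂ : MA₂ ∈ A₂ ∧ ∀ x ∈ A₂, x ≤ MA₂)
    (B₁ B₂ : Set ℝ)
    (hB₁ : IsApproxSet ρ MA₁ {x | x ∈ A₁} B₁)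
    (hB₂ : IsApproxSet ρ MA₂ {x | x ∈ A₂} B₂)
    (MB₁ MB₂ : ℝ) (hMB₁ : IsGreatest B₁ MB₁) (hMB₂ : IsGreatest B₂ MB₂)
    (C : Set ℝ)
    (hC : IsApproxSet ε (MB₁ + MB₂) (setSumset B₁ B₂) C) :
    IsApproxSet (ε + (1 + ε) * ρ) (MA₁ + MA₂) (msetSumset A₁ A₂) C := by
  obtain ⟨hB₁sub, hB₁near, hB₁cov⟩ := hB₁
  obtain ⟨hB₂sub, hB₂near, hB₂cov⟩ := hB₂
  obtain ⟨hCsub, hCnear, hCcov⟩ := hC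
  have hMA₁0 : 0 ≤ MA₁ := hA₁ _ hMA₁.1
  have hMA₂0 : 0 ≤ MA₂ := hA₂ _ hMA₂.1
  have hMB₁le : MB₁ ≤ (1 + ρ) * MA₁ := (hB₁sub hMB₁.1).2
  have hMB₂le : MB₂ ≤ (1 + ρ) * MA₂ := (hB₂sub hMB₂.1).2
  have hMB₁0 : 0 ≤ MB₁ := (hB₁sub hMB₁.1).1
  have hMB₂0 : 0 ≤ MB₂ := (hB₂sub hMB₂.1).1
  refine ⟨?_, ?_, ?_⟩
  · intro c hc
    have h := hCsub hc
    exact ⟨h.1, by nlinarith [h.2]⟩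
  · intro c hc
    obtain ⟨s, hs, hcs⟩ := hCnear c hc
    obtain ⟨b₁, hb₁, b₂, hb₂, rfl⟩ := hs
    have h1 : ∃ a₁, (a₁ ∈ A₁ ∨ a₁ = 0) ∧ |b₁ - a₁| ≤ ρ * MA₁ := by
      rcases hb₁ with h | h
      · exact ⟨0, Or.inr rfl, by simp [h, mul_nonneg hρ hMA₁0]⟩
      · obtain ⟨a, ha, hd⟩ := hB₁near b₁ h
        exact ⟨a, Or.inl ha, hd⟩
    have h2 : ∃ a₂, (a₂ ∈ A₂ ∨ a₂ = 0) ∧ |b₂ - a₂| ≤ ρ * MA₂ := by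
      rcases hb₂ with h | h
      · exact ⟨0, Or.inr rfl, by simp [h, mul_nonneg hρ hMA₂0]⟩
      · obtain ⟨a, ha, hd⟩ := hB₂near b₂ h
        exact ⟨a, Or.inl ha, hd⟩
    obtain ⟨a₁, ha₁, hd₁⟩ := h1
    obtain ⟨a₂, ha₂, hd₂⟩ := h2
    refine ⟨a₁ + a₂, ⟨a₁, a₂, ha₁, ha₂, rfl⟩, ?_⟩
    have htri : |c - (a₁ + a₂)| ≤ |c - (b₁ + b₂)| + |b₁ - a₁| + |b₂ - a₂| := by
      have : c - (a₁ + a₂) = (c - (b₁ + b₂)) + (b₁ - a₁) + (b₂ - a₂) := by ring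
      rw [this]
      exact le_trans (abs_add_le _ _) (by gcongr; exact abs_add_le _ _)
    nlinarith [hcs]
  · intro a ha hau
    obtain ⟨a₁, a₂, ha₁, ha₂, rfl⟩ := ha
    have h1 : ∃ b₁, b₁ ∈ insert (0:ℝ) B₁ ∧ b₁ ≤ MB₁ ∧ |b₁ - a₁| ≤ ρ * MA₁ := by
      rcases ha₁ with h | h
      · obtain ⟨b, hb, hd⟩ := hB₁cov a₁ h (hMA₁.2 _ h)
        exact ⟨b, Set.mem_insert_of_mem _ hb, hMB₁.2 hb, hd⟩
      · exact ⟨0, Set.mem_insert _ _, hMB₁0, by simp [h, mul_nonneg hρ hMA₁0]⟩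
    have h2 : ∃ b₂, b₂ ∈ insert (0:ℝ) B₂ ∧ b₂ ≤ MB₂ ∧ |b₂ - a₂| ≤ ρ * MA₂ := by
      rcases ha₂ with h | h
      · obtain ⟨b, hb, hd⟩ := hB₂cov a₂ h (hMA₂.2 _ h)
        exact ⟨b, Set.mem_insert_of_mem _ hb, hMB₂.2 hb, hd⟩
      · exact ⟨0, Set.mem_insert _ _, hMB₂0, by simp [h, mul_nonneg hρ hMA₂0]⟩
    obtain ⟨b₁, hb₁, hb₁le, hd₁⟩ := h1
    obtain ⟨b₂, hb₂, hb₂le, hd₂⟩ := h2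
    obtain ⟨c, hc, hcs⟩ := hCcov (b₁ + b₂) ⟨b₁, hb₁, b₂, hb₂, rfl⟩ (by linarith)
    refine ⟨c, hc, ?_⟩
    have htri : |c - (a₁ + a₂)| ≤ |c - (b₁ + b₂)| + |b₁ - a₁| + |b₂ - a₂| := by
      have : c - (a₁ + a₂) = (c - (b₁ + b₂)) + (b₁ - a₁) + (b₂ - a₂) := by ring
      rw [this]
      exact le_trans (abs_add_le _ _) (by gcongr; exact abs_add_le _ _)
    nlinarith [hcs]
end

section
/- Let B₁ and B₂ be finite multisets of nonnegative reals, let ω > 0 and ε ∈ (0,1]. For i = 1,2 define B_i^ω := {b ∈ B_i : b ≤ ω} (as a multiset). Suppose C is an (ε/2)-approximate set of the sumset B₁^ω ⊕ B₂^ω (i.e., an (ε/2, max(B₁^ω ⊕ B₂^ω))-approximate set). Then C^ω := C ∩ [0, (1+ε)ω] is an (ε, ω)-approximate set of the sumset B₁ ⊕ B₂. -/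
/-- with `Bᵢ^ω := {b ∈ Bᵢ : b ≤ ω}`, if `C` is an `(ε/2)`-approximate set of
`B₁^ω ⊕ B₂^ω` (relative to its maximum `M`), then `C^ω := C ∩ [0, (1+ε)ω]` is an
`(ε, ω)`-approximate set of `B₁ ⊕ B₂`. -/
theorem capped_approx_sumset
    (B₁ B₂ : Multiset ℝ) (h₁ : ∀ x ∈ B₁, 0 ≤ x) (h₂ : ∀ x ∈ B₂, 0 ≤ x)
    (ω ε : ℝ) (hω : 0 < ω) (hε₁ : 0 < ε) (hε₂ : ε ≤ 1)
    (M : ℝ)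
    (hM : IsGreatest
      (msetSumset (B₁.filter (fun b : ℝ => b ≤ ω)) (B₂.filter (fun b : ℝ => b ≤ ω))) M)
    (C : Set ℝ)
    (hC : IsApproxSet (ε / 2) M
      (msetSumset (B₁.filter (fun b : ℝ => b ≤ ω)) (B₂.filter (fun b : ℝ => b ≤ ω))) C) :
    IsApproxSet ε ω (msetSumset B₁ B₂) (C ∩ Set.Icc 0 ((1 + ε) * ω)) := by
  obtain ⟨hCsub, hCnear, hCcov⟩ := hC
  -- M ≤ 2ω
  have hM2 : M ≤ 2 * ω := by
    obtain ⟨x₁, x₂, hx₁, hx₂, hsum⟩ := hM.1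
    have e1 : x₁ ≤ ω := by
      rcases hx₁ with h | h
      · exact (Multiset.mem_filter.mp h).2
      · simpa [h] using hω.le
    have e2 : x₂ ≤ ω := by
      rcases hx₂ with h | h
      · exact (Multiset.mem_filter.mp h).2
      · simpa [h] using hω.le
    rw [hsum]; linarith
  have key : ε / 2 * M ≤ ε * ω := by nlinarith
  refine ⟨Set.inter_subset_right, ?_, ?_⟩
  · rintro c ⟨hcC, _⟩
    obtain ⟨a, ha, hanear⟩ := hCnear c hcC
    refine ⟨a, ?_, hanear.trans key⟩
    obtain ⟨x₁, x₂, hx₁, hx₂, hsum⟩ := ha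
    exact ⟨x₁, x₂, hx₁.imp_left (fun h => (Multiset.mem_filter.mp h).1),
      hx₂.imp_left (fun h => (Multiset.mem_filter.mp h).1), hsum⟩
  · rintro a ⟨x₁, x₂, hx₁, hx₂, rfl⟩ hle
    have nn1 : 0 ≤ x₁ := hx₁.elim (h₁ _) (fun h => le_of_eq h.symm)
    have nn2 : 0 ≤ x₂ := hx₂.elim (h₂ _) (fun h => le_of_eq h.symm)
    have haA : x₁ + x₂ ∈ msetSumset (B₁.filter (fun b : ℝ => b ≤ ω))
        (B₂.filter (fun b : ℝ => b ≤ ω)) := by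
      refine ⟨x₁, x₂, ?_, ?_, rfl⟩
      · exact hx₁.imp_left (fun h => Multiset.mem_filter.mpr ⟨h, by linarith⟩)
      · exact hx₂.imp_left (fun h => Multiset.mem_filter.mpr ⟨h, by linarith⟩)
    obtain ⟨c, hcC, hcnear⟩ := hCcov _ haA (hM.2 haA)
    have hc0 : 0 ≤ c := (hCsub hcC).1
    have : |c - (x₁ + x₂)| ≤ ε * ω := hcnear.trans key
    refine ⟨c, ⟨hcC, hc0, ?_⟩, this⟩
    have := abs_le.mp this
    linarith [this.2]
end

section
/- Let G be a nonempty finite set of nonnegative reals with maximum G^max, let υ ≥ 0 and ε ≥ 0 be reals, and let H be a positive integer. Define the sequence f₀ := 0 and f_h := ε + 2(1+ε)f_{h−1} for h ≥ 1. Let U₀ := G and suppose that, for each h = 1, …, H, U_h is an (ε, min{2^h·G^max, υ} + f_{h−1}·min{2^h·G^max, 2υ})-approximate set of the sumset U_{h−1} ⊕ U_{h−1}. Then for every h = 1, …, H, U_h is an (f_h, min{2^h·G^max, υ})-approximate set of the 2^h-fold sumset G ⊕ G ⊕ ⋯ ⊕ G (2^h copies); in particular, U_h is an (f_h, υ)-approximate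 set of that 2^h-fold sumset. -/
/-- The `n`-fold sumset `G ⊕ ⋯ ⊕ G` (`n` copies) of a set `G` of reals:
all sums of `n` elements of `G ∪ {0}`. -/
def nFoldSumset (G : Set ℝ) (n : ℕ) : Set ℝ :=
  {s | ∃ x : Fin n → ℝ, (∀ i, x i ∈ insert (0 : ℝ) G) ∧ s = ∑ i, x i}

lemma nFoldSumset_add (G : Set ℝ) (m n : ℕ) :
    nFoldSumset G (m + n) = setSumset (nFoldSumset G m) (nFoldSumset G n) := by
  ext s
  constructor
  · rintro ⟨x, hx, rfl⟩
    refine ⟨∑ i : Fin m, x (Fin.castAdd n i), Set.mem_insert_of_mem _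
      ⟨fun i => x (Fin.castAdd n i), fun i => hx _, rfl⟩,
      ∑ i : Fin n, x (Fin.natAdd m i), Set.mem_insert_of_mem _
      ⟨fun i => x (Fin.natAdd m i), fun i => hx _, rfl⟩, ?_⟩
    exact Fin.sum_univ_add x
  · rintro ⟨a, ha, b, hb, rfl⟩
    have hz : ∀ (k : ℕ) (c : ℝ), c ∈ insert (0:ℝ) (nFoldSumset G k) →
        ∃ x : Fin k → ℝ, (∀ i, x i ∈ insert (0 : ℝ) G) ∧ c = ∑ i, x i := by
      rintro k c (rfl | ⟨x, hx, rfl⟩)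
      · exact ⟨fun _ => 0, fun _ => Set.mem_insert _ _, by simp⟩
      · exact ⟨x, hx, rfl⟩
    obtain ⟨x, hx, rfl⟩ := hz m a ha
    obtain ⟨y, hy, rfl⟩ := hz n b hb
    refine ⟨Fin.append x y, ?_, ?_⟩
    · intro i
      refine Fin.addCases (fun i => ?_) (fun i => ?_) i
      · rw [Fin.append_left]; exact hx i
      · rw [Fin.append_right]; exact hy i
    · rw [Fin.sum_univ_add]
      simp [Fin.append_left, Fin.append_right]

lemma nFoldSumset_one (G : Set ℝ) : nFoldSumset G 1 = insert (0:ℝ) G := by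
  ext s
  constructor
  · rintro ⟨x, hx, rfl⟩; simpa using hx 0
  · intro hs; exact ⟨fun _ => s, fun _ => hs, by simp⟩

lemma setSumset_insert_zero (A B : Set ℝ) :
    setSumset (insert (0:ℝ) A) (insert (0:ℝ) B) = setSumset A B := by
  simp [setSumset, Set.insert_idem]

lemma approx_double (ε f1 f2 m1 m2 : ℝ) (S C D : Set ℝ)
    (hε : 0 ≤ ε) (hf1 : 0 ≤ f1) (hm1 : 0 ≤ m1) (hm12 : m1 ≤ m2)
    (hf2 : f2 = ε + 2 * (1 + ε) * f1)
    (hS0 : ∀ s ∈ S, 0 ≤ s)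
    (hSm : ∀ s ∈ S, s ≤ m2 → s ≤ m1)
    (h1 : IsApproxSet f1 m1 S C)
    (h2 : IsApproxSet ε (m2 + f1 * (2 * m1)) (setSumset C C) D) :
    IsApproxSet f2 m2 (setSumset S S) D := by
  have hm2 : 0 ≤ m2 := hm1.trans hm12
  have hsub : 0 ≤ f1 * (m2 - m1) := mul_nonneg hf1 (sub_nonneg.2 hm12)
  have hkey : ε * (m2 + f1 * (2 * m1)) + 2 * (f1 * m1) ≤ f2 * m2 := by
    rw [hf2]; nlinarith [mul_nonneg hε hsub]
  refine ⟨?_, ?_, ?_⟩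
  · intro c hc
    obtain ⟨h0, hup⟩ := h2.1 hc
    refine ⟨h0, hup.trans ?_⟩
    rw [hf2]; nlinarith [mul_nonneg hε hsub]
  · intro c hc
    obtain ⟨s, ⟨c1, hc1, c2, hc2, rfl⟩, hcs⟩ := h2.2.1 c hc
    have hget : ∀ ci ∈ insert (0:ℝ) C, ∃ ai ∈ insert (0:ℝ) S, |ci - ai| ≤ f1 * m1 := by
      rintro ci (rfl | hci)
      · exact ⟨0, Set.mem_insert _ _, by simpa using mul_nonneg hf1 hm1⟩
      · obtain ⟨a, ha, hd⟩ := h1.2.1 ci hci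
        exact ⟨a, Set.mem_insert_of_mem _ ha, hd⟩
    obtain ⟨a1, ha1, hd1⟩ := hget c1 hc1
    obtain ⟨a2, ha2, hd2⟩ := hget c2 hc2
    refine ⟨a1 + a2, ⟨a1, ha1, a2, ha2, rfl⟩, ?_⟩
    have heq : c - (a1 + a2) = (c - (c1 + c2)) + (c1 - a1) + (c2 - a2) := by ring
    calc |c - (a1 + a2)| ≤ |c - (c1 + c2)| + |c1 - a1| + |c2 - a2| := by
          rw [heq]; exact (abs_add_le _ _).trans (add_le_add_left (abs_add_le _ _) _)
      _ ≤ ε * (m2 + f1 * (2 * m1)) + 2 * (f1 * m1) := by linarith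
      _ ≤ f2 * m2 := hkey
  · rintro a ⟨a1, ha1, a2, ha2, rfl⟩ ha
    have h0 : ∀ ai ∈ insert (0:ℝ) S, 0 ≤ ai := by
      rintro ai (rfl | hai)
      · exact le_refl 0
      · exact hS0 _ hai
    have ha1' : a1 ≤ m2 := by have := h0 a2 ha2; linarith
    have ha2' : a2 ≤ m2 := by have := h0 a1 ha1; linarith
    have hget : ∀ ai ∈ insert (0:ℝ) S, ai ≤ m2 →
        ∃ ci ∈ insert (0:ℝ) C, |ci - ai| ≤ f1 * m1 := by
      rintro ai (rfl | hai) hle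
      · exact ⟨0, Set.mem_insert _ _, by simpa using mul_nonneg hf1 hm1⟩
      · obtain ⟨c, hc, hd⟩ := h1.2.2 ai hai (hSm ai hai hle)
        exact ⟨c, Set.mem_insert_of_mem _ hc, hd⟩
    obtain ⟨c1, hc1, hd1⟩ := hget a1 ha1 ha1'
    obtain ⟨c2, hc2, hd2⟩ := hget a2 ha2 ha2'
    have hs : c1 + c2 ≤ m2 + f1 * (2 * m1) := by
      have e1 := (abs_le.1 hd1).2
      have e2 := (abs_le.1 hd2).2
      linarith
    obtain ⟨d, hd, hdd⟩ := h2.2.2 (c1 + c2) ⟨c1, hc1, c2, hc2, rfl⟩ hs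
    refine ⟨d, hd, ?_⟩
    have heq : d - (a1 + a2) = (d - (c1 + c2)) + (c1 - a1) + (c2 - a2) := by ring
    calc |d - (a1 + a2)| ≤ |d - (c1 + c2)| + |c1 - a1| + |c2 - a2| := by
          rw [heq]; exact (abs_add_le _ _).trans (add_le_add_left (abs_add_le _ _) _)
      _ ≤ ε * (m2 + f1 * (2 * m1)) + 2 * (f1 * m1) := by linarith
      _ ≤ f2 * m2 := hkey

/-- iterated doubling.  With `f₀ = 0`, `f_h = ε + 2(1+ε)f_{h-1}`, `U₀ = G`,
and `U_{h+1}` an `(ε, min{2^{h+1}G^max, υ} + f_h·min{2^{h+1}G^max, 2υ})`-approximate set of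
`U_h ⊕ U_h` for all `h < H`, every `U_h` (for `1 ≤ h ≤ H`) is an
`(f_h, min{2^h·G^max, υ})`-approximate set — in particular an `(f_h, υ)`-approximate
set — of the `2^h`-fold sumset of `G`. -/
theorem iterated_doubling_approx
    (G : Set ℝ) (hGfin : G.Finite) (hGpos : ∀ x ∈ G, 0 ≤ x)
    (Gmax : ℝ) (hGmax : IsGreatest G Gmax)
    (υ ε : ℝ) (hυ : 0 ≤ υ) (hε : 0 ≤ ε)
    (H : ℕ) (hH : 0 < H)
    (f : ℕ → ℝ) (hf0 : f 0 = 0) (hf : ∀ h : ℕ, f (h + 1) = ε + 2 * (1 + ε) * f h)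
    (U : ℕ → Set ℝ) (hU0 : U 0 = G)
    (hU : ∀ h : ℕ, h < H →
      IsApproxSet ε
        (min ((2 : ℝ) ^ (h + 1) * Gmax) υ + f h * min ((2 : ℝ) ^ (h + 1) * Gmax) (2 * υ))
        (setSumset (U h) (U h)) (U (h + 1))) :
    ∀ h : ℕ, 1 ≤ h → h ≤ H →
      IsApproxSet (f h) (min ((2 : ℝ) ^ h * Gmax) υ) (nFoldSumset G (2 ^ h)) (U h) ∧
      IsApproxSet (f h) υ (nFoldSumset G (2 ^ h)) (U h) := by
  obtain ⟨hGmem, hGub⟩ := hGmax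
  have hGmax0 : 0 ≤ Gmax := hGpos _ hGmem
  have hfpos : ∀ h, 0 ≤ f h := by
    intro h
    induction h with
    | zero => rw [hf0]
    | succ n ih => rw [hf]; nlinarith
  -- bounds on elements of n-fold sumsets
  have hbound : ∀ (n : ℕ) (s : ℝ), s ∈ nFoldSumset G n → 0 ≤ s ∧ s ≤ (n : ℝ) * Gmax := by
    rintro n s ⟨x, hx, rfl⟩
    have hxi : ∀ i, 0 ≤ x i ∧ x i ≤ Gmax := by
      intro i
      rcases hx i with h | h
      · exact ⟨le_of_eq h.symm, h ▸ hGmax0⟩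
      · exact ⟨hGpos _ h, hGub h⟩
    constructor
    · exact Finset.sum_nonneg fun i _ => (hxi i).1
    · calc ∑ i, x i ≤ ∑ _i : Fin n, Gmax := Finset.sum_le_sum fun i _ => (hxi i).2
        _ = (n : ℝ) * Gmax := by simp [mul_comm]
  have hbound' : ∀ (h : ℕ) (s : ℝ), s ∈ nFoldSumset G (2 ^ h) →
      0 ≤ s ∧ s ≤ (2 : ℝ) ^ h * Gmax := by
    intro h s hs
    have := hbound (2 ^ h) s hs
    rwa [Nat.cast_pow, Nat.cast_ofNat] at this
  have hm0 : ∀ h : ℕ, 0 ≤ min ((2 : ℝ) ^ h * Gmax) υ :=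
    fun h => le_min (by positivity) hυ
  have hmmono : ∀ h : ℕ, min ((2 : ℝ) ^ h * Gmax) υ ≤ min ((2 : ℝ) ^ (h + 1) * Gmax) υ := by
    intro h
    refine min_le_min (mul_le_mul_of_nonneg_right ?_ hGmax0) le_rfl
    exact pow_le_pow_right₀ (by norm_num) (Nat.le_succ h)
  have hdouble : ∀ h : ℕ, min ((2 : ℝ) ^ (h + 1) * Gmax) (2 * υ) =
      2 * min ((2 : ℝ) ^ h * Gmax) υ := by
    intro h
    rw [pow_succ, mul_comm ((2:ℝ)^h) 2, mul_assoc]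
    rcases le_total ((2:ℝ) ^ h * Gmax) υ with hle | hle
    · rw [min_eq_left hle, min_eq_left (by linarith)]
    · rw [min_eq_right hle, min_eq_right (by linarith)]
  -- main induction: the first statement
  have key : ∀ h : ℕ, 1 ≤ h → h ≤ H →
      IsApproxSet (f h) (min ((2 : ℝ) ^ h * Gmax) υ) (nFoldSumset G (2 ^ h)) (U h) := by
    intro h h1
    induction h, h1 using Nat.le_induction with
    | base =>
      intro _
      have h1 := hU 0 hH
      rw [hf0, hU0] at h1
      simp only [zero_mul, add_zero, zero_add, pow_one] at h1 ⊢
      have hset : nFoldSumset G 2 = setSumset G G := by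
        have : (2 : ℕ) = 1 + 1 := rfl
        rw [this, nFoldSumset_add, nFoldSumset_one, setSumset_insert_zero]
      rw [hf 0, hf0]
      simp only [mul_zero, add_zero]
      rw [hset]
      exact h1
    | succ n hn ih =>
      intro hnH
      have hnH' : n < H := hnH
      have ihn := ih (le_of_lt hnH')
      have h2 := hU n hnH'
      rw [hdouble n] at h2
      have hset : nFoldSumset G (2 ^ (n + 1)) =
          setSumset (nFoldSumset G (2 ^ n)) (nFoldSumset G (2 ^ n)) := by
        rw [pow_succ, mul_two, nFoldSumset_add]
      rw [hset]
      refine approx_double ε (f n) (f (n + 1)) (min ((2 : ℝ) ^ n * Gmax) υ)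
        (min ((2 : ℝ) ^ (n + 1) * Gmax) υ) (nFoldSumset G (2 ^ n)) (U n) (U (n + 1))
        hε (hfpos n) (hm0 n) (hmmono n) (hf n) (fun s hs => (hbound' n s hs).1) ?_ ihn h2
      intro s hs hsle
      exact le_min (hbound' n s hs).2 (hsle.trans (min_le_right _ _))
  intro h h1 hH'
  have first := key h h1 hH'
  refine ⟨first, ?_, ?_, ?_⟩
  · intro c hc
    obtain ⟨h0, hup⟩ := first.1 hc
    refine ⟨h0, hup.trans ?_⟩
    have : min ((2 : ℝ) ^ h * Gmax) υ ≤ υ := min_le_right _ _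
    nlinarith [hfpos h, hm0 h]
  · intro c hc
    obtain ⟨a, ha, hd⟩ := first.2.1 c hc
    exact ⟨a, ha, hd.trans (mul_le_mul_of_nonneg_left (min_le_right _ _) (hfpos h))⟩
  · intro a ha hau
    obtain ⟨c, hc, hd⟩ := first.2.2 a ha (le_min (hbound' h a ha).2 hau)
    exact ⟨c, hc, hd.trans (mul_le_mul_of_nonneg_left (min_le_right _ _) (hfpos h))⟩
end

section
/- Let G be a nonempty finite set of positive integers with minimum g₀ := min G, let L be a positive integer, and let υ > 0 be a real with ⌊υ/g₀⌋ ≤ L. Let M̄ be the multiset consisting of exactly L copies of each element of G, and let G_L be the L-fold sumset of G. Then for every real r ≥ 0: if C is an (r, υ)-approximate set of G_L, then C is an (r, υ)-approximate set of S(M̄). -/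
/-- The `n`-fold sumset `G ⊕ ⋯ ⊕ G` (`n` copies) of a set `G` of naturals:
all sums of `n` elements of `G ∪ {0}`. -/
def nFoldSumsetNat (G : Set ℕ) (n : ℕ) : Set ℕ :=
  {s | ∃ x : Fin n → ℕ, (∀ i, x i ∈ insert (0 : ℕ) G) ∧ s = ∑ i, x i}

lemma zero_mem_nfold (G : Set ℕ) (n : ℕ) : 0 ∈ nFoldSumsetNat G n :=
  ⟨fun _ => 0, fun _ => Set.mem_insert _ _, by simp⟩

lemma succ_mem_nfold (G : Set ℕ) (n s g : ℕ) (hg : g ∈ insert (0 : ℕ) G)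
    (hs : s ∈ nFoldSumsetNat G n) : g + s ∈ nFoldSumsetNat G (n + 1) := by
  obtain ⟨x, hx, rfl⟩ := hs
  exact ⟨Fin.cons g x, fun i => Fin.cases hg hx i, by rw [Fin.sum_univ_succ]; simp⟩

lemma multiset_sum_mem_nfold (G : Finset ℕ) :
    ∀ (Z : Multiset ℕ) (L : ℕ), Multiset.card Z ≤ L → (∀ z ∈ Z, z ∈ G) →
      Z.sum ∈ nFoldSumsetNat (↑G) L := by
  intro Z
  induction Z using Multiset.induction_on with
  | empty => intro L _ _; simpa using zero_mem_nfold (↑G) L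
  | cons a Z ih =>
    intro L hcard hmem
    match L with
    | 0 => simp at hcard
    | L + 1 =>
      rw [Multiset.sum_cons]
      refine succ_mem_nfold _ _ _ _
        (Set.mem_insert_of_mem _ (hmem a (Multiset.mem_cons_self _ _))) ?_
      exact ih L (by simp at hcard; omega) (fun z hz => hmem z (Multiset.mem_cons_of_mem hz))

lemma nfold_subset_subsetSums (G : Finset ℕ) (L : ℕ) (s : ℕ)
    (hs : s ∈ nFoldSumsetNat (↑G) L) : ∃ Y ≤ L • G.val, Y.sum = s := by
  obtain ⟨x, hx, rfl⟩ := hs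
  refine ⟨(Finset.univ.filter (fun i => x i ≠ 0)).val.map x, ?_, ?_⟩
  · rw [Multiset.le_iff_count]
    intro a
    rw [Multiset.count_nsmul]
    by_cases haG : a ∈ G
    · calc Multiset.count a ((Finset.univ.filter (fun i => x i ≠ 0)).val.map x)
          ≤ Multiset.card ((Finset.univ.filter (fun i => x i ≠ 0)).val.map x) :=
            Multiset.count_le_card _ _
        _ ≤ L := by
            rw [Multiset.card_map]
            exact le_trans (Finset.card_filter_le Finset.univ (fun i => x i ≠ 0)) (by simp)
        _ ≤ L * Multiset.count a G.val :=
            Nat.le_mul_of_pos_right _ (Multiset.count_pos.2 haG)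
    · have hnot : a ∉ (Finset.univ.filter (fun i => x i ≠ 0)).val.map x := by
        intro hmem
        obtain ⟨i, hi, rfl⟩ := Multiset.mem_map.1 hmem
        have hi' : x i ≠ 0 := (Finset.mem_filter.1 (cast Finset.mem_val hi)).2
        rcases Set.mem_insert_iff.1 (hx i) with h0 | hG'
        · exact hi' h0
        · exact haG hG'
      exact le_trans (Nat.le_of_eq (Multiset.count_eq_zero.2 hnot)) (Nat.zero_le _)
  · have : ((Finset.univ.filter (fun i => x i ≠ 0)).val.map x).sum
        = ∑ i ∈ Finset.univ.filter (fun i => x i ≠ 0), x i := rfl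
    rw [this, Finset.sum_filter_ne_zero]

/-- let `M̄` consist of `L` copies of each element of `G`, with
`⌊υ / min G⌋ ≤ L`.  Any `(r, υ)`-approximate set of the `L`-fold sumset `G_L` is an
`(r, υ)`-approximate set of `S(M̄)`. -/
theorem approx_lfold_sumset_is_approx_subsetSums
    (G : Finset ℕ) (hG : G.Nonempty) (hGpos : ∀ x ∈ G, 0 < x)
    (L : ℕ) (hL : 0 < L) (υ : ℝ) (hυ : 0 < υ)
    (hfloor : ⌊υ / ((G.min' hG : ℕ) : ℝ)⌋₊ ≤ L)
    (r : ℝ) (hr : 0 ≤ r) (C : Set ℝ)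
    (hC : IsApproxSet r υ ((fun n : ℕ => (n : ℝ)) '' nFoldSumsetNat (↑G) L) C) :
    IsApproxSet r υ ((fun n : ℕ => (n : ℝ)) '' {s : ℕ | ∃ Y ≤ L • G.val, Y.sum = s}) C := by
  obtain ⟨hC1, hC2, hC3⟩ := hC
  have hg0 : 0 < G.min' hG := hGpos _ (G.min'_mem hG)
  refine ⟨hC1, ?_, ?_⟩
  · intro c hc
    obtain ⟨a, ⟨s, hs, rfl⟩, hca⟩ := hC2 c hc
    exact ⟨(s : ℝ), ⟨s, nfold_subset_subsetSums G L s hs, rfl⟩, hca⟩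
  · rintro a ⟨s, ⟨Y, hY, hsum⟩, rfl⟩ hale
    have hYmem : ∀ y ∈ Y, y ∈ G := by
      intro y hy
      have := Multiset.mem_of_le hY hy
      exact cast Finset.mem_val (Multiset.mem_nsmul.1 this).2
    have hcard_g0 : Multiset.card Y * G.min' hG ≤ s := by
      rw [← hsum, ← smul_eq_mul]
      exact Multiset.card_nsmul_le_sum (fun y hy => G.min'_le y (hYmem y hy))
    have hcardL : Multiset.card Y ≤ L := by
      refine le_trans (Nat.le_floor ?_) hfloor
      rw [le_div_iff₀ (by exact_mod_cast hg0)]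
      calc (Multiset.card Y : ℝ) * (G.min' hG : ℕ) = ((Multiset.card Y * G.min' hG : ℕ) : ℝ) := by
            push_cast; ring
        _ ≤ (s : ℝ) := by exact_mod_cast hcard_g0
        _ ≤ υ := hale
    have hsG : s ∈ nFoldSumsetNat (↑G) L := by
      rw [← hsum]; exact multiset_sum_mem_nfold G Y L hcardL hYmem
    exact hC3 (s : ℝ) ⟨s, hsG, rfl⟩ hale
end

section
/- There exist an absolute constant C > 0 and an ε₀ ∈ (0,1) with the following property (structural preprocessing for UNBOUNDED SUBSET SUM). Let ε ∈ (0, ε₀], let t > 0 be real, and let X be a nonempty finite set of distinct positive integers with εt < x < t for every x ∈ X. Let OPT := max{Σ_{x∈X} m_x·x : (m_x)_{x∈X} ∈ ℕ^X, Σ_{x∈X} m_x·x ≤ t}, and set t̂ := (1+ε)/ε³ and K := 2^{1+⌊log₂(log₂(1/ε)+1)⌋}. Then there exist an integer N with 1 ≤ N ≤ C·(1+log₂|X|)·(1+log₂(1/ε))² and multisets Y₁, …, Y_N of positive reals such that, writing Y := Y₁ ⊎ ⋯ ⊎ Y_N: (B) max{Σ(Y′) : Y′ ⊆ Y, Σ(Y′)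 ≤ t̂} ≥ (1−ε)·OPT/(ε³t); (D) Σ_{i=1}^{N} |set(Y_i)| ≤ |X|; (E) for each i: Y_i ⊆ [2^{j_i−1}(1−ε)/ε², 2^{j_i}(1+ε)/ε²] for some positive integer j_i; Y_i = ρ_i·Ȳ_i for some real ρ_i ≥ 1/(2ε) and some set Ȳ_i of positive integers with Ȳ_i ⊆ [1/(2ε), 1/ε]; and every element of Y_i has the same multiplicity l_i in Y_i, where, with n_i := ⌊t̂ / min(Y_i)⌋, l_i = K if n_i ≤ K and l_i = 2n_i·K if n_i > K; and (F) for every i and every y ∈ Y_i there exists x′ ∈ X with |x′ − ε³t·y| ≤ ε·x′. -/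
noncomputable def PPsig (m : ℕ) : ℝ := (2:ℝ) ^ (((m:ℝ)+2)/4)
noncomputable def PPm (ε t : ℝ) (x : ℕ) : ℕ := ⌊4 * Real.logb 2 ((x:ℝ) / (ε*t))⌋₊
noncomputable def PPs (ε t : ℝ) (x : ℕ) : ℝ := ((x:ℝ) / (ε*t)) / (PPsig (PPm ε t x) * ε)
noncomputable def PPn (ε t : ℝ) (x : ℕ) : ℕ := ⌈PPs ε t x * (1-ε)⌉₊
noncomputable def PPy (ε t : ℝ) (x : ℕ) : ℝ := (PPsig (PPm ε t x) / ε) * (PPn ε t x)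

lemma PPsig_pos (m : ℕ) : 0 < PPsig m := Real.rpow_pos_of_pos two_pos _

lemma PPsig_ge_one (m : ℕ) : 1 ≤ PPsig m :=
  Real.one_le_rpow one_le_two (by positivity)

lemma PPc1 : (3/5 : ℝ) ≤ (2:ℝ) ^ (-(1:ℝ)/2) := by
  have h0 : (0:ℝ) < (2:ℝ) ^ (-(1:ℝ)/2) := Real.rpow_pos_of_pos two_pos _
  have hsq : ((2:ℝ) ^ (-(1:ℝ)/2)) ^ (2:ℕ) = 1/2 := by
    rw [← Real.rpow_natCast ((2:ℝ) ^ (-(1:ℝ)/2)) 2, ← Real.rpow_mul (by norm_num)]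
    norm_num
  nlinarith [h0, hsq]

lemma PPc3 : (2:ℝ) ^ (-(1:ℝ)/4) ≤ 7/8 := by
  have h0 : (0:ℝ) < (2:ℝ) ^ (-(1:ℝ)/4) := Real.rpow_pos_of_pos two_pos _
  have hsq : ((2:ℝ) ^ (-(1:ℝ)/4)) ^ (4:ℕ) = 1/2 := by
    rw [← Real.rpow_natCast ((2:ℝ) ^ (-(1:ℝ)/4)) 4, ← Real.rpow_mul (by norm_num)]
    norm_num
  nlinarith [h0, hsq, sq_nonneg (((2:ℝ) ^ (-(1:ℝ)/4))^2 - 49/64), sq_nonneg ((2:ℝ) ^ (-(1:ℝ)/4) - 7/8), sq_nonneg ((2:ℝ) ^ (-(1:ℝ)/4) + 7/8)]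

section
variable {ε t : ℝ} {x : ℕ}

lemma PPr (hε : 0 < ε) (ht : 0 < t) (hx1 : ε*t < (x:ℝ)) :
    (2:ℝ) ^ ((PPm ε t x : ℝ)/4) ≤ (x:ℝ)/(ε*t) ∧ (x:ℝ)/(ε*t) < (2:ℝ) ^ (((PPm ε t x : ℝ)+1)/4) := by
  have het : 0 < ε * t := mul_pos hε ht
  have hr1 : 1 < (x:ℝ)/(ε*t) := (one_lt_div het).2 hx1
  have hr0 : 0 < (x:ℝ)/(ε*t) := lt_trans one_pos hr1
  have hlog : 0 < Real.logb 2 ((x:ℝ)/(ε*t)) := Real.logb_pos one_lt_two hr1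
  have h1 : (PPm ε t x : ℝ) ≤ 4 * Real.logb 2 ((x:ℝ)/(ε*t)) := Nat.floor_le (by positivity)
  have h2 : 4 * Real.logb 2 ((x:ℝ)/(ε*t)) < (PPm ε t x : ℝ) + 1 := Nat.lt_floor_add_one _
  constructor
  · calc (2:ℝ) ^ ((PPm ε t x : ℝ)/4) ≤ (2:ℝ) ^ (Real.logb 2 ((x:ℝ)/(ε*t))) :=
        Real.rpow_le_rpow_of_exponent_le one_le_two (by linarith)
      _ = (x:ℝ)/(ε*t) := Real.rpow_logb two_pos (by norm_num) hr0
  · calc (x:ℝ)/(ε*t) = (2:ℝ) ^ (Real.logb 2 ((x:ℝ)/(ε*t))) :=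
        (Real.rpow_logb two_pos (by norm_num) hr0).symm
      _ < (2:ℝ) ^ (((PPm ε t x : ℝ)+1)/4) :=
        Real.rpow_lt_rpow_of_exponent_lt one_lt_two (by linarith)

lemma PPs_bounds (hε : 0 < ε) (ht : 0 < t) (hx1 : ε*t < (x:ℝ)) :
    (2:ℝ)^(-(1:ℝ)/2)/ε ≤ PPs ε t x ∧ PPs ε t x ≤ (2:ℝ)^(-(1:ℝ)/4)/ε := by
  obtain ⟨hL, hU⟩ := PPr hε ht hx1
  set m := PPm ε t x with hm
  have hσ : 0 < PPsig m := PPsig_pos m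
  have hkey1 : PPsig m * (2:ℝ)^(-(1:ℝ)/2) = (2:ℝ) ^ ((m:ℝ)/4) := by
    rw [PPsig, ← Real.rpow_add two_pos]
    congr 1; ring
  have hkey2 : PPsig m * (2:ℝ)^(-(1:ℝ)/4) = (2:ℝ) ^ (((m:ℝ)+1)/4) := by
    rw [PPsig, ← Real.rpow_add two_pos]
    congr 1; ring
  constructor
  · rw [PPs, div_le_div_iff₀ hε (mul_pos hσ hε)]
    nlinarith [hL, hσ, hε]
  · rw [PPs, div_le_div_iff₀ (mul_pos hσ hε) hε]
    nlinarith [hU.le, hσ, hε]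

end

section
variable {ε t : ℝ} {x : ℕ}

lemma PPn_bounds (hε : 0 < ε) (hε16 : ε ≤ 1/16) (ht : 0 < t) (hx1 : ε*t < (x:ℝ)) :
    (1-ε) * PPs ε t x ≤ (PPn ε t x : ℝ) ∧ (PPn ε t x : ℝ) ≤ (1+ε) * PPs ε t x ∧
    1/(2*ε) ≤ (PPn ε t x : ℝ) ∧ (PPn ε t x : ℝ) ≤ 1/ε := by
  obtain ⟨hsL, hsU⟩ := PPs_bounds hε ht hx1
  have hc1 := PPc1
  have hc3 := PPc3
  have hs0 : (3/5)/ε ≤ PPs ε t x := le_trans (by gcongr) hsL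
  have hspos : 0 < PPs ε t x := lt_of_lt_of_le (by positivity) hs0
  have hεlt : ε < 1 := by linarith
  have h1 : (1-ε) * PPs ε t x ≤ (PPn ε t x : ℝ) := by
    rw [mul_comm]; exact Nat.le_ceil _
  have h2 : (PPn ε t x : ℝ) ≤ (1+ε) * PPs ε t x := by
    have hlt : (PPn ε t x : ℝ) < PPs ε t x * (1-ε) + 1 :=
      Nat.ceil_lt_add_one (mul_nonneg hspos.le (by linarith))
    rw [div_le_iff₀ hε] at hs0
    nlinarith
  refine ⟨h1, h2, ?_, ?_⟩
  · rw [div_le_iff₀ (by positivity)]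
    rw [div_le_iff₀ hε] at hs0
    nlinarith
  · have hsU' : PPs ε t x ≤ (7/8)/ε := le_trans hsU (by gcongr)
    rw [le_div_iff₀ hε]
    rw [le_div_iff₀ hε] at hsU'
    nlinarith

lemma PPn_pos (hε : 0 < ε) (hε16 : ε ≤ 1/16) (ht : 0 < t) (hx1 : ε*t < (x:ℝ)) :
    0 < PPn ε t x := by
  rcases Nat.eq_zero_or_pos (PPn ε t x) with h0 | h
  · exfalso
    have h := (PPn_bounds hε hε16 ht hx1).2.2.1
    rw [h0] at h
    have hpos : (0:ℝ) < 1/(2*ε) := by positivity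
    simp only [Nat.cast_zero] at h
    linarith
  · exact h

lemma PPy_pos (hε : 0 < ε) (hε16 : ε ≤ 1/16) (ht : 0 < t) (hx1 : ε*t < (x:ℝ)) :
    0 < PPy ε t x := by
  have hn := PPn_pos hε hε16 ht hx1
  have hσ := PPsig_pos (PPm ε t x)
  rw [PPy]
  have : (0:ℝ) < (PPn ε t x : ℝ) := by exact_mod_cast hn
  positivity

lemma PPy_bounds (hε : 0 < ε) (hε16 : ε ≤ 1/16) (ht : 0 < t) (hx1 : ε*t < (x:ℝ)) :
    (1-ε)*(x:ℝ) ≤ ε^3*t*PPy ε t x ∧ ε^3*t*PPy ε t x ≤ (1+ε)*(x:ℝ) := by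
  obtain ⟨h1, h2, _, _⟩ := PPn_bounds hε hε16 ht hx1
  set m := PPm ε t x with hm
  have hσ : 0 < PPsig m := PPsig_pos m
  have hxeq : PPs ε t x * (PPsig m * ε) * (ε*t) = (x:ℝ) := by
    rw [PPs, ← hm]
    field_simp
  have hyeq : ε^3*t*PPy ε t x = PPsig m * ε^2 * t * (PPn ε t x : ℝ) := by
    rw [PPy, ← hm]
    field_simp
  have hpos : (0:ℝ) < PPsig m * ε^2 * t := by positivity
  constructor
  · rw [hyeq, ← hxeq]
    nlinarith [mul_le_mul_of_nonneg_left h1 hpos.le]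
  · rw [hyeq, ← hxeq]
    nlinarith [mul_le_mul_of_nonneg_left h2 hpos.le]

lemma PPy_dyadic (hε : 0 < ε) (hε16 : ε ≤ 1/16) (ht : 0 < t) (hx1 : ε*t < (x:ℝ)) :
    (2:ℝ)^(PPm ε t x/4) * (1-ε)/ε^2 ≤ PPy ε t x ∧
    PPy ε t x ≤ (2:ℝ)^(PPm ε t x/4 + 1) * (1+ε)/ε^2 := by
  obtain ⟨h1, h2, _, _⟩ := PPn_bounds hε hε16 ht hx1
  obtain ⟨hsL, hsU⟩ := PPs_bounds hε ht hx1
  set m := PPm ε t x with hm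
  have hσ : 0 < PPsig m := PPsig_pos m
  have hεlt : ε < 1 := by linarith
  have hkey1 : PPsig m * (2:ℝ)^(-(1:ℝ)/2) = (2:ℝ) ^ ((m:ℝ)/4) := by
    rw [PPsig, ← Real.rpow_add two_pos]; congr 1; ring
  have hkey2 : PPsig m * (2:ℝ)^(-(1:ℝ)/4) = (2:ℝ) ^ (((m:ℝ)+1)/4) := by
    rw [PPsig, ← Real.rpow_add two_pos]; congr 1; ring
  have hp1 : ((2:ℝ)^(m/4) : ℝ) ≤ (2:ℝ) ^ ((m:ℝ)/4) := by
    rw [← Real.rpow_natCast 2 (m/4)]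
    apply Real.rpow_le_rpow_of_exponent_le one_le_two
    rw [le_div_iff₀ (by norm_num : (0:ℝ) < 4)]
    exact_mod_cast Nat.div_mul_le_self m 4
  have hp2 : (2:ℝ) ^ (((m:ℝ)+1)/4) ≤ ((2:ℝ)^(m/4 + 1) : ℝ) := by
    rw [← Real.rpow_natCast 2 (m/4 + 1)]
    apply Real.rpow_le_rpow_of_exponent_le one_le_two
    rw [div_le_iff₀ (by norm_num : (0:ℝ) < 4)]
    have h4 : m + 1 ≤ (m/4 + 1) * 4 := by omega
    exact_mod_cast h4
  have hc1 := PPc1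
  have hinv : (0:ℝ) < ε⁻¹ := by positivity
  constructor
  · have ha : (1-ε) * ((2:ℝ)^(-(1:ℝ)/2)/ε) ≤ (PPn ε t x : ℝ) :=
      le_trans (mul_le_mul_of_nonneg_left hsL (by linarith)) h1
    calc ((2:ℝ)^(m/4)) * (1-ε)/ε^2
        ≤ (2:ℝ)^((m:ℝ)/4) * (1-ε)/ε^2 := by
          apply div_le_div_of_nonneg_right ?_ (by positivity)
          exact mul_le_mul_of_nonneg_right hp1 (by linarith)
      _ = PPsig m / ε * ((1-ε) * ((2:ℝ)^(-(1:ℝ)/2)/ε)) := by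
          rw [← hkey1]; field_simp
      _ ≤ PPsig m / ε * (PPn ε t x : ℝ) :=
          mul_le_mul_of_nonneg_left ha (by positivity)
      _ = PPy ε t x := by rw [PPy, ← hm]
  · have hb : (PPn ε t x : ℝ) ≤ (1+ε) * ((2:ℝ)^(-(1:ℝ)/4)/ε) :=
      le_trans h2 (mul_le_mul_of_nonneg_left hsU (by linarith))
    calc PPy ε t x = PPsig m / ε * (PPn ε t x : ℝ) := by rw [PPy, ← hm]
      _ ≤ PPsig m / ε * ((1+ε) * ((2:ℝ)^(-(1:ℝ)/4)/ε)) :=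
          mul_le_mul_of_nonneg_left hb (by positivity)
      _ = (2:ℝ)^(((m:ℝ)+1)/4) * (1+ε)/ε^2 := by
          rw [← hkey2]; field_simp
      _ ≤ ((2:ℝ)^(m/4 + 1)) * (1+ε)/ε^2 := by
          apply div_le_div_of_nonneg_right ?_ (by positivity)
          exact mul_le_mul_of_nonneg_right hp2 (by linarith)
end


/-- structural preprocessing for UNBOUNDED SUBSET SUM.  An instance
`(X, t)` of UNBOUNDED SUBSET SUM with `εt < x < t` for all `x ∈ X` can be reduced to a
bounded instance `(Y, t̂)` with `t̂ = (1+ε)/ε³`, where `Y` is a union of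
`O(log|X|·log²(1/ε))` groups `Y i`, each lying in a dyadic range
`[2^{j-1}(1-ε)/ε², 2^j(1+ε)/ε²]`, equal (as a set) to `ρ·Ȳ` for a set
`Ȳ ⊆ ℕ ∩ [1/(2ε), 1/ε]` and a scalar `ρ ≥ 1/(2ε)`, with all multiplicities equal to the
prescribed value `l_i` determined by `n_i = ⌊t̂ / min(Y i)⌋` and
`K = 2^{1+⌊log₂(log₂(1/ε)+1)⌋}`; the optimal value of `(Y, t̂)` is at least
`(1-ε)·OPT/(ε³t)`, `Σᵢ|set(Y i)| ≤ |X|`, and every `y ∈ Y i` can be traced back to some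
`x' ∈ X` with `|x' - ε³t·y| ≤ ε·x'`. -/
theorem unboundedSubsetSum_preprocessing :
    ∃ (C : ℝ) (ε₀ : ℝ), 0 < C ∧ 0 < ε₀ ∧ ε₀ < 1 ∧
      ∀ (ε : ℝ), 0 < ε → ε ≤ ε₀ →
      ∀ (t : ℝ), 0 < t →
      ∀ (X : Finset ℕ), X.Nonempty →
        (∀ x ∈ X, ε * t < (x : ℝ) ∧ (x : ℝ) < t) →
      ∀ (OPT : ℕ),
        IsGreatest {s : ℕ | (∃ mlt : ℕ → ℕ, s = ∑ x ∈ X, mlt x * x) ∧ (s : ℝ) ≤ t} OPT →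
      ∃ (N : ℕ) (Y : Fin N → Multiset ℝ),
        1 ≤ N ∧
        (N : ℝ) ≤ C * (1 + Real.logb 2 (X.card)) * (1 + Real.logb 2 (1 / ε)) ^ 2 ∧
        -- (B)
        (∃ Y' ≤ ∑ i, Y i, Y'.sum ≤ (1 + ε) / ε ^ 3 ∧
          (1 - ε) * (OPT : ℝ) / (ε ^ 3 * t) ≤ Y'.sum) ∧
        -- (D)
        (∑ i, (Y i).toFinset.card) ≤ X.card ∧
        -- (E)
        (∀ i : Fin N,
          (∃ j : ℕ, 0 < j ∧ ∀ y ∈ Y i,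
            2 ^ (j - 1) * (1 - ε) / ε ^ 2 ≤ y ∧ y ≤ 2 ^ j * (1 + ε) / ε ^ 2) ∧
          (∃ (ρ : ℝ) (Ybar : Finset ℕ),
            1 / (2 * ε) ≤ ρ ∧
            (∀ n ∈ Ybar, 1 / (2 * ε) ≤ (n : ℝ) ∧ (n : ℝ) ≤ 1 / ε) ∧
            (∀ y : ℝ, y ∈ Y i ↔ ∃ n ∈ Ybar, y = ρ * (n : ℝ)) ∧
            (∃ ymin : ℝ, IsLeast {y : ℝ | y ∈ Y i} ymin ∧
              ∀ y ∈ Y i, (Y i).count y =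
                (if ⌊((1 + ε) / ε ^ 3) / ymin⌋₊ ≤
                    2 ^ (1 + ⌊Real.logb 2 (Real.logb 2 (1 / ε) + 1)⌋₊)
                 then 2 ^ (1 + ⌊Real.logb 2 (Real.logb 2 (1 / ε) + 1)⌋₊)
                 else 2 * ⌊((1 + ε) / ε ^ 3) / ymin⌋₊ *
                   2 ^ (1 + ⌊Real.logb 2 (Real.logb 2 (1 / ε) + 1)⌋₊))))) ∧
        -- (F)
        (∀ i : Fin N, ∀ y ∈ Y i, ∃ x' ∈ X, |(x' : ℝ) - ε ^ 3 * t * y| ≤ ε * (x' : ℝ)) := by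
  classical
  refine ⟨100, 1/16, by norm_num, by norm_num, by norm_num, ?_⟩
  intro ε hε hε16 t ht X hXne hX OPT hOPT
  obtain ⟨⟨mlt, hOPTeq⟩, hOPTle⟩ := hOPT.1
  have het : 0 < ε * t := mul_pos hε ht
  set I : Finset ℕ := X.image (PPm ε t) with hI
  have hIne : I.Nonempty := hXne.image _
  set G : ℕ → Finset ℕ := fun m => X.filter (fun x => PPm ε t x = m) with hG
  set S : ℕ → Finset ℝ := fun m => (G m).image (PPy ε t) with hSdef
  have hGX : ∀ m, ∀ x ∈ G m, x ∈ X := fun m x hx => (Finset.mem_filter.1 hx).1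
  have hGm : ∀ m, ∀ x ∈ G m, PPm ε t x = m := fun m x hx => (Finset.mem_filter.1 hx).2
  have hGne : ∀ m ∈ I, (G m).Nonempty := by
    intro m hm
    obtain ⟨x, hx, hxm⟩ := Finset.mem_image.1 hm
    exact ⟨x, Finset.mem_filter.2 ⟨hx, hxm⟩⟩
  have hSne : ∀ m ∈ I, (S m).Nonempty := fun m hm => (hGne m hm).image _
  have hSpos : ∀ m, ∀ a ∈ S m, 0 < a := by
    intro m a ha
    obtain ⟨x, hx, rfl⟩ := Finset.mem_image.1 ha
    exact PPy_pos hε hε16 ht (hX x (hGX m x hx)).1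
  set Kv : ℕ := 2 ^ (1 + ⌊Real.logb 2 (Real.logb 2 (1/ε) + 1)⌋₊) with hKv
  have hKv1 : 1 ≤ Kv := Nat.one_le_two_pow
  set ymin : ℕ → ℝ := fun m => if h : (S m).Nonempty then (S m).min' h else 0 with hymin
  set nv : ℕ → ℕ := fun m => ⌊((1+ε)/ε^3) / ymin m⌋₊ with hnv
  set lv : ℕ → ℕ := fun m => if nv m ≤ Kv then Kv else 2 * nv m * Kv with hlv
  have hlv_n : ∀ m, nv m ≤ lv m := by
    intro m
    by_cases h : nv m ≤ Kv
    · simpa [hlv, h] using h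
    · simp only [hlv, if_neg h]
      calc nv m = nv m * 1 := (mul_one _).symm
        _ ≤ 2 * nv m * Kv := by
            rw [two_mul]
            exact Nat.mul_le_mul (Nat.le_add_right _ _) hKv1
  have hlv_pos : ∀ m, 0 < lv m := by
    intro m
    by_cases h : nv m ≤ Kv <;> simp only [hlv, if_pos, if_neg, h, if_true, if_false]
    · omega
    · have : 0 < nv m := by omega
      positivity
  set Ygrp : ℕ → Multiset ℝ := fun m => lv m • (S m).val with hYgrp
  let e := I.equivFin
  have hsumM : ∀ (g : ℕ → Multiset ℝ), ∑ i : Fin I.card, g ((e.symm i : ℕ)) = ∑ m ∈ I, g m := by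
    intro g
    calc ∑ i : Fin I.card, g ((e.symm i : ℕ)) = ∑ a : I, g a := Equiv.sum_comp e.symm (fun a => g (a : ℕ))
      _ = ∑ m ∈ I, g m := Finset.sum_coe_sort I g
  have hsumN : ∀ (g : ℕ → ℕ), ∑ i : Fin I.card, g ((e.symm i : ℕ)) = ∑ m ∈ I, g m := by
    intro g
    calc ∑ i : Fin I.card, g ((e.symm i : ℕ)) = ∑ a : I, g a := Equiv.sum_comp e.symm (fun a => g (a : ℕ))
      _ = ∑ m ∈ I, g m := Finset.sum_coe_sort I g
  -- membership in groups
  have hmemY : ∀ m (y : ℝ), y ∈ Ygrp m ↔ y ∈ S m := by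
    intro m y
    rw [hYgrp]
    rw [Multiset.mem_nsmul_of_ne_zero (hlv_pos m).ne']
    exact Finset.mem_def.symm
  refine ⟨I.card, fun i => Ygrp ((e.symm i : ℕ)), Finset.card_pos.2 hIne, ?_, ?_, ?_, ?_, ?_⟩
  · -- N bound
    have hX1 : (1:ℝ) ≤ (X.card : ℝ) := by exact_mod_cast Finset.card_pos.2 hXne
    have ha : 0 ≤ Real.logb 2 (X.card) := Real.logb_nonneg one_lt_two hX1
    have hεi : (1:ℝ) ≤ 1/ε := by rw [le_div_iff₀ hε]; linarith
    have hL : 0 ≤ Real.logb 2 (1/ε) := Real.logb_nonneg one_lt_two hεi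
    have hIsub : I ⊆ Finset.range (⌊4 * Real.logb 2 (1/ε)⌋₊ + 1) := by
      intro m hm
      obtain ⟨x, hx, rfl⟩ := Finset.mem_image.1 hm
      rw [Finset.mem_range, Nat.lt_add_one_iff]
      apply Nat.floor_le_floor
      have hr0 : (0:ℝ) < (x:ℝ)/(ε*t) := by
        have hx0 : (0:ℝ) < (x:ℝ) := het.trans (hX x hx).1
        positivity
      have hr : (x:ℝ)/(ε*t) ≤ 1/ε := by
        rw [div_le_div_iff₀ het hε]
        nlinarith [(hX x hx).2, hε]
      have := Real.logb_le_logb_of_le one_lt_two hr0 hr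
      linarith
    have hNle : I.card ≤ ⌊4 * Real.logb 2 (1/ε)⌋₊ + 1 := by
      calc I.card ≤ (Finset.range (⌊4 * Real.logb 2 (1/ε)⌋₊ + 1)).card := Finset.card_le_card hIsub
        _ = ⌊4 * Real.logb 2 (1/ε)⌋₊ + 1 := Finset.card_range _
    have hNr : (I.card : ℝ) ≤ 4 * Real.logb 2 (1/ε) + 1 := by
      calc (I.card:ℝ) ≤ ((⌊4 * Real.logb 2 (1/ε)⌋₊ + 1 : ℕ) : ℝ) := by exact_mod_cast hNle
        _ ≤ 4 * Real.logb 2 (1/ε) + 1 := by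
            push_cast
            have := Nat.floor_le (by positivity : (0:ℝ) ≤ 4 * Real.logb 2 (1/ε))
            linarith
    nlinarith [hNr, ha, hL, sq_nonneg (1 + Real.logb 2 (1/ε)),
      mul_nonneg ha (sq_nonneg (1 + Real.logb 2 (1/ε)))]
  · -- (B)
    have hOPTr : (OPT:ℝ) = ∑ x ∈ X, (mlt x:ℝ) * (x:ℝ) := by exact_mod_cast hOPTeq
    set Y' : Multiset ℝ := ∑ x ∈ X, (mlt x) • ({PPy ε t x} : Multiset ℝ) with hY'
    have hYsum : Y'.sum = ∑ x ∈ X, (mlt x : ℝ) * PPy ε t x := by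
      rw [hY']
      rw [show (Multiset.sum : Multiset ℝ → ℝ) = ⇑(Multiset.sumAddMonoidHom) from
        (Multiset.coe_sumAddMonoidHom).symm, map_sum]
      refine Finset.sum_congr rfl fun x _ => ?_
      simp [Multiset.nsmul_singleton, Multiset.sum_replicate, nsmul_eq_mul]
    have hεt3 : (0:ℝ) < ε^3*t := by positivity
    -- the three claims
    refine ⟨Y', ?_, ?_, ?_⟩
    · -- Y' ≤ ∑ Y i
      rw [Multiset.le_iff_count]
      intro a
      have perm : ∀ m ∈ I, ∑ x ∈ G m, mlt x * (if a = PPy ε t x then 1 else 0)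
          ≤ Multiset.count a (Ygrp m) := by
        intro m hmI
        have hcount : Multiset.count a (Ygrp m) = lv m * Multiset.count a (S m).val := by
          simp only [hYgrp]
          rw [Multiset.count_nsmul]
        by_cases ha : a ∈ S m
        · rw [hcount, Multiset.count_eq_one_of_mem (S m).nodup (Finset.mem_def.1 ha), mul_one]
          have hsum_eq : ∑ x ∈ G m, mlt x * (if a = PPy ε t x then 1 else 0)
              = ∑ x ∈ (G m).filter (fun x => a = PPy ε t x), mlt x := by
            have h1 : ∑ x ∈ (G m).filter (fun x => a = PPy ε t x), mlt x
                = ∑ x ∈ G m, if a = PPy ε t x then mlt x else 0 :=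
              Finset.sum_filter _ _
            rw [h1]
            exact Finset.sum_congr rfl fun x _ => by by_cases h : a = PPy ε t x <;> simp [h]
          rw [hsum_eq]
          have hymineq : ymin m = (S m).min' (hSne m hmI) := by
            simp only [hymin]
            exact dif_pos _
          have hymin_pos : 0 < ymin m := by
            rw [hymineq]
            exact hSpos m _ (Finset.min'_mem _ _)
          have hya : ymin m ≤ a := by rw [hymineq]; exact Finset.min'_le _ _ ha
          have ha_pos : 0 < a := hSpos m a ha
          have hFsub : (G m).filter (fun x => a = PPy ε t x) ⊆ X :=
            le_trans (Finset.filter_subset _ _) (Finset.filter_subset _ _)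
          have key : (∑ x ∈ (G m).filter (fun x => a = PPy ε t x), (mlt x:ℝ)) * (ε^3*t*a)
              ≤ (1+ε)*t := by
            rw [Finset.sum_mul]
            calc ∑ x ∈ (G m).filter (fun x => a = PPy ε t x), (mlt x:ℝ) * (ε^3*t*a)
                ≤ ∑ x ∈ (G m).filter (fun x => a = PPy ε t x), (mlt x:ℝ) * ((1+ε)*(x:ℝ)) := by
                  refine Finset.sum_le_sum fun x hx => ?_
                  have hax : a = PPy ε t x := (Finset.mem_filter.1 hx).2
                  have hb := (PPy_bounds hε hε16 ht (hX x (hFsub hx)).1).2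
                  rw [← hax] at hb
                  exact mul_le_mul_of_nonneg_left hb (Nat.cast_nonneg _)
              _ = (1+ε) * ∑ x ∈ (G m).filter (fun x => a = PPy ε t x), (mlt x:ℝ)*(x:ℝ) := by
                  rw [Finset.mul_sum]
                  exact Finset.sum_congr rfl fun x _ => by ring
              _ ≤ (1+ε) * ∑ x ∈ X, (mlt x:ℝ)*(x:ℝ) := by
                  refine mul_le_mul_of_nonneg_left ?_ (by linarith)
                  refine Finset.sum_le_sum_of_subset_of_nonneg hFsub fun x _ _ => by positivity
              _ = (1+ε) * OPT := by rw [hOPTr]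
              _ ≤ (1+ε) * t := mul_le_mul_of_nonneg_left hOPTle (by linarith)
          have hAa : (∑ x ∈ (G m).filter (fun x => a = PPy ε t x), (mlt x:ℝ)) * a
              ≤ (1+ε)/ε^3 := by
            rw [show (1+ε)/ε^3 = ((1+ε)*t)/(ε^3*t) by field_simp]
            rw [le_div_iff₀ hεt3]
            calc (∑ x ∈ (G m).filter (fun x => a = PPy ε t x), (mlt x:ℝ)) * a * (ε^3*t)
                = (∑ x ∈ (G m).filter (fun x => a = PPy ε t x), (mlt x:ℝ)) * (ε^3*t*a) := by ring
              _ ≤ (1+ε)*t := key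
          have hAle : ((∑ x ∈ (G m).filter (fun x => a = PPy ε t x), mlt x : ℕ):ℝ)
              ≤ ((1+ε)/ε^3)/(ymin m) := by
            rw [le_div_iff₀ hymin_pos]
            push_cast
            have hAnn : (0:ℝ) ≤ ∑ x ∈ (G m).filter (fun x => a = PPy ε t x), (mlt x:ℝ) := by
              positivity
            calc (∑ x ∈ (G m).filter (fun x => a = PPy ε t x), (mlt x:ℝ)) * ymin m
                ≤ (∑ x ∈ (G m).filter (fun x => a = PPy ε t x), (mlt x:ℝ)) * a :=
                  mul_le_mul_of_nonneg_left hya hAnn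
              _ ≤ (1+ε)/ε^3 := hAa
          have hAnv : (∑ x ∈ (G m).filter (fun x => a = PPy ε t x), mlt x) ≤ nv m := by
            simp only [hnv]
            exact Nat.le_floor hAle
          exact le_trans hAnv (hlv_n m)
        · have h0 : Multiset.count a (S m).val = 0 :=
            Multiset.count_eq_zero.2 (fun hmem => ha (Finset.mem_def.2 hmem))
          rw [hcount, h0, mul_zero]
          apply Nat.le_of_eq
          refine Finset.sum_eq_zero fun x hx => ?_
          have : a ≠ PPy ε t x := by
            intro hax
            exact ha (hax ▸ Finset.mem_image_of_mem _ hx)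
          simp [this]
      calc Multiset.count a Y'
          = ∑ x ∈ X, mlt x * (if a = PPy ε t x then 1 else 0) := by
            rw [hY', Multiset.count_sum']
            refine Finset.sum_congr rfl fun x _ => ?_
            rw [Multiset.count_nsmul, Multiset.count_singleton]
        _ = ∑ m ∈ I, ∑ x ∈ G m, mlt x * (if a = PPy ε t x then 1 else 0) := by
            simp only [hG]
            exact (Finset.sum_fiberwise_of_maps_to
              (fun x hx => Finset.mem_image_of_mem _ hx) _).symm
        _ ≤ ∑ m ∈ I, Multiset.count a (Ygrp m) := Finset.sum_le_sum perm
        _ = Multiset.count a (∑ m ∈ I, Ygrp m) := Multiset.count_sum'.symm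
        _ = Multiset.count a (∑ i, Ygrp ((e.symm i : ℕ))) := by
            rw [hsumM (fun m => Ygrp m)]
    · -- upper bound on sum
      rw [hYsum]
      calc ∑ x ∈ X, (mlt x:ℝ) * PPy ε t x
          ≤ ∑ x ∈ X, (mlt x:ℝ) * ((1+ε)*(x:ℝ)/(ε^3*t)) := by
            refine Finset.sum_le_sum fun x hx => ?_
            refine mul_le_mul_of_nonneg_left ?_ (Nat.cast_nonneg _)
            rw [le_div_iff₀ hεt3]
            have hb := (PPy_bounds hε hε16 ht (hX x hx).1).2
            linarith
        _ = (1+ε)/(ε^3*t) * ∑ x ∈ X, (mlt x:ℝ)*(x:ℝ) := by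
            rw [Finset.mul_sum]
            exact Finset.sum_congr rfl fun x _ => by ring
        _ = (1+ε)/(ε^3*t) * OPT := by rw [hOPTr]
        _ ≤ (1+ε)/(ε^3*t) * t := mul_le_mul_of_nonneg_left hOPTle (by positivity)
        _ = (1+ε)/ε^3 := by field_simp
    · -- lower bound on sum
      rw [hYsum]
      calc (1-ε) * (OPT:ℝ) / (ε^3*t)
          = ∑ x ∈ X, (mlt x:ℝ) * ((1-ε)*(x:ℝ)/(ε^3*t)) := by
            rw [hOPTr, Finset.mul_sum, Finset.sum_div]
            exact Finset.sum_congr rfl fun x _ => by ring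
        _ ≤ ∑ x ∈ X, (mlt x:ℝ) * PPy ε t x := by
            refine Finset.sum_le_sum fun x hx => ?_
            refine mul_le_mul_of_nonneg_left ?_ (Nat.cast_nonneg _)
            rw [div_le_iff₀ hεt3]
            have hb := (PPy_bounds hε hε16 ht (hX x hx).1).1
            linarith
  · -- (D)
    rw [hsumN (fun m => (Ygrp m).toFinset.card)]
    have h1 : ∀ m ∈ I, (Ygrp m).toFinset.card ≤ (G m).card := by
      intro m _
      have e1 : (Ygrp m).toFinset = S m := by
        simp only [hYgrp]
        rw [Multiset.toFinset_nsmul _ _ (hlv_pos m).ne', Finset.val_toFinset]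
      rw [e1]
      exact Finset.card_image_le
    calc ∑ m ∈ I, (Ygrp m).toFinset.card ≤ ∑ m ∈ I, (G m).card := Finset.sum_le_sum h1
      _ = X.card := by
          simp only [hG]
          exact (Finset.card_eq_sum_card_fiberwise
            (fun x hx => Finset.mem_image_of_mem _ hx)).symm
  · -- (E)
    intro i
    set m : ℕ := ((e.symm i : ℕ)) with hmdef
    have hmI : m ∈ I := (e.symm i).2
    have hSm : (S m).Nonempty := hSne m hmI
    constructor
    · refine ⟨m/4 + 1, Nat.succ_pos _, ?_⟩
      intro y hy
      rw [hmemY] at hy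
      obtain ⟨x, hx, rfl⟩ := Finset.mem_image.1 hy
      have hd := PPy_dyadic hε hε16 ht (hX x (hGX m x hx)).1
      rw [hGm m x hx] at hd
      refine ⟨?_, ?_⟩
      · simpa using hd.1
      · exact hd.2
    · refine ⟨PPsig m / ε, (G m).image (PPn ε t), ?_, ?_, ?_, ?_⟩
      · have h1 := PPsig_ge_one m
        calc 1/(2*ε) ≤ 1/ε := by
              rw [div_le_div_iff₀ (by positivity) hε]
              nlinarith
          _ ≤ PPsig m/ε := by gcongr
      · intro n hn
        obtain ⟨x, hx, rfl⟩ := Finset.mem_image.1 hn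
        have hb := PPn_bounds hε hε16 ht (hX x (hGX m x hx)).1
        exact ⟨hb.2.2.1, hb.2.2.2⟩
      · intro y
        rw [hmemY]
        constructor
        · intro hy
          obtain ⟨x, hx, rfl⟩ := Finset.mem_image.1 hy
          refine ⟨PPn ε t x, Finset.mem_image_of_mem _ hx, ?_⟩
          rw [PPy, hGm m x hx]
        · rintro ⟨n, hn, rfl⟩
          obtain ⟨x, hx, rfl⟩ := Finset.mem_image.1 hn
          have hxy : PPy ε t x = PPsig m/ε * (PPn ε t x : ℝ) := by
            rw [PPy, hGm m x hx]
          rw [← hxy]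
          exact Finset.mem_image_of_mem _ hx
      · refine ⟨(S m).min' hSm, ⟨?_, ?_⟩, ?_⟩
        · exact (hmemY m _).2 (Finset.min'_mem _ _)
        · intro y hy
          exact Finset.min'_le _ _ ((hmemY m y).1 hy)
        · intro y hy
          have hyS : y ∈ S m := (hmemY m y).1 hy
          have hcount : (Ygrp m).count y = lv m := by
            simp only [hYgrp]
            rw [Multiset.count_nsmul,
              Multiset.count_eq_one_of_mem (S m).nodup (Finset.mem_def.1 hyS), mul_one]
          rw [hcount]
          have hymineq : ymin m = (S m).min' hSm := by
            simp only [hymin]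
            exact dif_pos _
          simp only [hlv, hnv, hymineq]
  · -- (F)
    intro i y hy
    rw [hmemY] at hy
    obtain ⟨x, hx, rfl⟩ := Finset.mem_image.1 hy
    have hxX := hGX _ x hx
    obtain ⟨hb1, hb2⟩ := PPy_bounds hε hε16 ht (hX x hxX).1
    refine ⟨x, hxX, abs_le.2 ⟨by linarith, ?_⟩⟩
    have hx0 : (0:ℝ) ≤ x := Nat.cast_nonneg x
    nlinarith [hb1, hε, hx0]
end
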